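/- arXiv:1711.00814 — 10 statements merged into one kernel-verified Lean document; each statement's English description precedes it below -/
import Mathlib

section
/- Let d be a positive integer, let η = (η_1,…,η_d) be a probability distribution over [d], and let α ≥ 1 and 0 ≤ β ≤ α be real numbers. Then M_{α+β}(η) ≤ d^{(α−1)(α−β)/α} · M_α(η)^2, and M_{α−β}(η) ≤ d^β · M_α(η). -/
/-!
Put `x i = η i ^ α` and `t = (α - β) / α ∈ [0, 1]`, so that the two power sums are `∑ x i ^ (2 - t)`
and `∑ x i ^ t`, while `S = ∑ x i = M_α(η)`. The power-mean inequality gives `1 ≤ d ^ (α - 1) * S`.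
Since `2 - t ≥ 1`, superadditivity of `x ↦ x ^ (2 - t)` bounds the first sum by `S ^ (2 - t)`;
since `t ≤ 1`, concavity of `x ↦ x ^ t` bounds the second by `d ^ (1 - t) * S ^ t`. Multiplying by
the powers `(d ^ (α - 1) * S) ^ t ≥ 1` resp. `(d ^ (α - 1) * S) ^ (1 - t) ≥ 1` gives the claims.
-/

open Finset

namespace Real

variable {ι : Type*} (s : Finset ι) {f : ι → ℝ}

theorem sum_rpow_le_rpow_sum (hf : ∀ i ∈ s, 0 ≤ f i) {p : ℝ} (hp : 1 ≤ p) :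
    ∑ i ∈ s, f i ^ p ≤ (∑ i ∈ s, f i) ^ p := by
  have hp' : p - 1 + 1 ≠ 0 := by linarith
  have hS : 0 ≤ ∑ i ∈ s, f i := sum_nonneg hf
  calc ∑ i ∈ s, f i ^ p = ∑ i ∈ s, f i ^ (p - 1) * f i := by
        refine sum_congr rfl fun i hi => ?_
        rw [← rpow_add_one' (hf i hi) hp', sub_add_cancel]
    _ ≤ ∑ i ∈ s, (∑ j ∈ s, f j) ^ (p - 1) * f i := by
        gcongr with i hi
        exacts [hf i hi, hf i hi, single_le_sum hf hi]
    _ = (∑ i ∈ s, f i) ^ p := by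
        rw [← mul_sum, ← rpow_add_one' hS hp', sub_add_cancel]

theorem sum_rpow_le_card_rpow_mul_rpow_sum (hf : ∀ i ∈ s, 0 ≤ f i) {r : ℝ} (hr0 : 0 ≤ r)
    (hr1 : r ≤ 1) : ∑ i ∈ s, f i ^ r ≤ (#s : ℝ) ^ (1 - r) * (∑ i ∈ s, f i) ^ r := by
  rcases hr0.eq_or_lt with rfl | hr0
  · simp
  have hfr : ∀ i ∈ s, 0 ≤ f i ^ r := fun i hi => rpow_nonneg (hf i hi) r
  have hS : 0 ≤ ∑ i ∈ s, f i := sum_nonneg hf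
  -- power mean inequality for `f i ^ r` with exponent `r⁻¹ ≥ 1`, then raised to the power `r`
  have key := rpow_sum_le_const_mul_sum_rpow_of_nonneg s (one_le_inv₀ hr0 |>.2 hr1) hfr
  rwa [sum_congr rfl fun i hi => rpow_rpow_inv (hf i hi) hr0.ne',
    rpow_inv_le_iff_of_pos (sum_nonneg hfr) (mul_nonneg (by positivity) hS) hr0,
    mul_rpow (by positivity) hS, ← rpow_mul (Nat.cast_nonneg _),
    sub_mul, inv_mul_cancel₀ hr0.ne', one_mul] at key

variable {c t : ℝ}

theorem sum_rpow_two_sub_le_rpow_mul_sq_sum (hf : ∀ i ∈ s, 0 ≤ f i)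
    (hcf : 1 ≤ c * ∑ i ∈ s, f i) (ht0 : 0 ≤ t) (ht1 : t ≤ 1) :
    ∑ i ∈ s, f i ^ (2 - t) ≤ c ^ t * (∑ i ∈ s, f i) ^ 2 := by
  set S := ∑ i ∈ s, f i
  have hS : 0 ≤ S := sum_nonneg hf
  have hc : 0 ≤ c := (pos_of_mul_pos_left (by linarith) hS).le
  calc ∑ i ∈ s, f i ^ (2 - t) ≤ S ^ (2 - t) := sum_rpow_le_rpow_sum s hf (by linarith)
    _ ≤ S ^ (2 - t) * (c * S) ^ t := le_mul_of_one_le_right (by positivity) (one_le_rpow hcf ht0)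
    _ = c ^ t * S ^ 2 := by
        rw [mul_rpow hc hS, mul_left_comm, ← rpow_add' hS (by norm_num), sub_add_cancel,
          rpow_two]

theorem sum_rpow_le_rpow_mul_sum (hf : ∀ i ∈ s, 0 ≤ f i)
    (hcf : 1 ≤ c * ∑ i ∈ s, f i) (ht0 : 0 ≤ t) (ht1 : t ≤ 1) :
    ∑ i ∈ s, f i ^ t ≤ (#s * c) ^ (1 - t) * ∑ i ∈ s, f i := by
  set S := ∑ i ∈ s, f i
  have hS : 0 ≤ S := sum_nonneg hf
  have hc : 0 ≤ c := (pos_of_mul_pos_left (by linarith) hS).le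
  calc ∑ i ∈ s, f i ^ t ≤ (#s : ℝ) ^ (1 - t) * S ^ t :=
        sum_rpow_le_card_rpow_mul_rpow_sum s hf ht0 ht1
    _ ≤ (#s : ℝ) ^ (1 - t) * S ^ t * (c * S) ^ (1 - t) :=
        le_mul_of_one_le_right (by positivity) (one_le_rpow hcf (by linarith))
    _ = (#s * c) ^ (1 - t) * S := by
        rw [mul_rpow hc hS, mul_rpow (Nat.cast_nonneg _) hc, mul_assoc, mul_left_comm (S ^ t),
          ← rpow_add' hS (by norm_num), add_sub_cancel, rpow_one, mul_assoc]

end Real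

theorem powerSum_bounds_of_one_le_general (d : ℕ) (η : Fin d → ℝ)
    (hnn : ∀ i, 0 ≤ η i) (hsum : ∑ i, η i = 1)
    (α β : ℝ) (hα : 1 ≤ α) (hβ0 : 0 ≤ β) (hβα : β ≤ α) :
    ∑ i, η i ^ (α + β) ≤ (d : ℝ) ^ ((α - 1) * (α - β) / α) * (∑ i, η i ^ α) ^ 2 ∧
    ∑ i, η i ^ (α - β) ≤ (d : ℝ) ^ β * (∑ i, η i ^ α) := by
  have hα0 : 0 < α := by linarith
  have hx : ∀ i ∈ univ, 0 ≤ η i ^ α := fun i _ => Real.rpow_nonneg (hnn i) α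
  have hM : 1 ≤ (d : ℝ) ^ (α - 1) * ∑ i, η i ^ α := by
    simpa [hsum] using Real.rpow_sum_le_const_mul_sum_rpow_of_nonneg univ hα fun i _ => hnn i
  set t := (α - β) / α
  have ht0 : 0 ≤ t := div_nonneg (by linarith) hα0.le
  have ht1 : t ≤ 1 := (div_le_one hα0).2 (by linarith)
  have hpow : ∀ i u, η i ^ (α * u) = (η i ^ α) ^ u := fun i u => Real.rpow_mul (hnn i) α u
  have hd : (0 : ℝ) ≤ d := Nat.cast_nonneg d
  constructor
  · have h := Real.sum_rpow_two_sub_le_rpow_mul_sq_sum univ hx hM ht0 ht1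
    rwa [← sum_congr rfl fun i _ => hpow i _, ← Real.rpow_mul hd, mul_sub,
      mul_div_cancel₀ _ hα0.ne', ← mul_div_assoc, show α * 2 - (α - β) = α + β by ring] at h
  · have h := Real.sum_rpow_le_rpow_mul_sum univ hx hM ht0 ht1
    rwa [← sum_congr rfl fun i _ => hpow i _, card_univ, Fintype.card_fin,
      ← Real.rpow_one_add' hd (by linarith), ← Real.rpow_mul hd, mul_div_cancel₀ _ hα0.ne',
      show (1 + (α - 1)) * (1 - (α - β) / α) = β by field_simp; ring] at h

/-- For a probability distribution `η` over `[d]` and reals `α ≥ 1`, `0 ≤ β ≤ α`,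
we have `M_{α+β}(η) ≤ d^((α-1)(α-β)/α) · M_α(η)^2` and `M_{α-β}(η) ≤ d^β · M_α(η)`. -/
theorem powerSum_bounds_of_one_le (d : ℕ) (hd : 0 < d) (η : Fin d → ℝ)
    (hnn : ∀ i, 0 ≤ η i) (hsum : ∑ i, η i = 1)
    (α β : ℝ) (hα : 1 ≤ α) (hβ0 : 0 ≤ β) (hβα : β ≤ α) :
    ∑ i, η i ^ (α + β) ≤ (d : ℝ) ^ ((α - 1) * (α - β) / α) * (∑ i, η i ^ α) ^ 2 ∧
    ∑ i, η i ^ (α - β) ≤ (d : ℝ) ^ β * (∑ i, η i ^ α) :=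
  powerSum_bounds_of_one_le_general d η hnn hsum α β hα hβ0 hβα
end

section
/- Let α ≥ 2 and 0 ≤ j ≤ α−1 be integers. Let σ_1 be a permutation of {1,…,α+j} that acts as a single cycle on the set {1,…,α} and fixes every element of {α+1,…,α+j}, and let σ_2 be a permutation of {1,…,α+j} that acts as a single cycle on the set {j+1,…,j+α} and fixes every element of {1,…,j}. Then every orbit of the composition σ_1 ∘ σ_2 on {1,…,α+j} contains an element of {j+1,…,α}; consequently, the number of orbits of the cyclic group generated by σ_1 ∘ σ_2 acting on {1,…,α+j} (equivalently, the number of cycles, counting fixed points as cycles of length one) is at most α − j. -/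
/-!
Write `A` and `B` for the sets on which `σ₁` and `σ₂` cycle. Starting from `x ∈ A`, the
iterates of `σ₁ * σ₂` agree with those of `σ₁` until the `σ₁`-orbit of `x` first enters `B`,
because `σ₂` fixes everything outside `B`; since `σ₁` cycles through `A ∩ B`, this happens.
Starting from `x ∈ B \ A`, the same argument for `σ₂ * σ₁`, transported along the conjugation
`(σ₁ * σ₂) ^ n ∘ σ₁ = σ₁ ∘ (σ₂ * σ₁) ^ n` and the fact that `σ₁ x = x`, moves `x` into `A`.
So every orbit meets `A ∩ B = {j, …, α - 1}`, which has `α - j` elements.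
-/

namespace Equiv.Perm

variable {α : Type*}

theorem mul_pow_apply_eq_pow_apply_of_fixed {f g : Perm α} {x : α} {n : ℕ}
    (hg : ∀ k < n, g ((f ^ k) x) = (f ^ k) x) : ((f * g) ^ n) x = (f ^ n) x := by
  induction n with
  | zero => rfl
  | succ n ih =>
    rw [pow_succ', mul_apply, ih fun k hk => hg k (by omega), mul_apply, hg n n.lt_succ_self,
      ← mul_apply, ← pow_succ']

theorem mul_pow_apply_apply (f g : Perm α) (n : ℕ) (x : α) :
    ((f * g) ^ n) (f x) = f (((g * f) ^ n) x) := by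
  have h : SemiconjBy f (g * f) (f * g) := (mul_assoc f g f).symm
  rw [← mul_apply, ← (h.pow_right n).eq, mul_apply]

variable [Finite α] {f g : Perm α} {A B : Set α} {x : α}

theorem exists_mul_pow_apply_mem_inter_of_mem_left (hf : f.IsCycleOn A)
    (hgB : ∀ y ∉ B, g y = y) (hAB : (A ∩ B).Nonempty) (hx : x ∈ A) :
    ∃ n : ℕ, ((f * g) ^ n) x ∈ A ∩ B := by
  classical
  obtain ⟨y, hyA, hyB⟩ := hAB
  have hreach : ∃ n : ℕ, (f ^ n) x ∈ B := by
    obtain ⟨n, hn⟩ := hf.exists_pow_eq' (Set.toFinite A) hx hyA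
    exact ⟨n, hn ▸ hyB⟩
  refine ⟨Nat.find hreach, ?_⟩
  rw [mul_pow_apply_eq_pow_apply_of_fixed fun k hk => hgB _ (Nat.find_min hreach hk)]
  exact ⟨(hf.1.perm_pow _).mapsTo hx, Nat.find_spec hreach⟩

theorem exists_mul_pow_apply_mem_inter (hf : f.IsCycleOn A) (hg : g.IsCycleOn B)
    (hfA : ∀ y ∉ A, f y = y) (hgB : ∀ y ∉ B, g y = y) (hAB : (A ∩ B).Nonempty)
    (hx : x ∈ A ∪ B) : ∃ n : ℕ, ((f * g) ^ n) x ∈ A ∩ B := by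
  by_cases hxA : x ∈ A
  · exact exists_mul_pow_apply_mem_inter_of_mem_left hf hgB hAB hxA
  have hxB : x ∈ B := hx.resolve_left hxA
  obtain ⟨m, -, hmA⟩ := exists_mul_pow_apply_mem_inter_of_mem_left hg hfA
    (Set.inter_comm A B ▸ hAB) hxB
  have hA : ((f * g) ^ m) x ∈ A := by
    rw [← hfA x hxA, mul_pow_apply_apply]
    exact hf.1.mapsTo hmA
  obtain ⟨n, hn⟩ := exists_mul_pow_apply_mem_inter_of_mem_left hf hgB hAB hA
  exact ⟨n + m, by rwa [pow_add, mul_apply]⟩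

theorem card_orbitRel_zpowers_le_ncard {π : Perm α} {S : Set α}
    (hS : ∀ x, ∃ n : ℕ, (π ^ n) x ∈ S) :
    Nat.card (Quotient (MulAction.orbitRel (Subgroup.zpowers π) α)) ≤ S.ncard := by
  rw [← Nat.card_coe_set_eq]
  refine Nat.card_le_card_of_surjective (fun y : S => Quotient.mk _ (y : α)) ?_
  intro q
  obtain ⟨x, rfl⟩ := Quotient.exists_rep q
  obtain ⟨n, hn⟩ := hS x
  exact ⟨⟨_, hn⟩, Quotient.sound ⟨⟨π ^ n, Subgroup.npow_mem_zpowers π n⟩, rfl⟩⟩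

end Equiv.Perm

theorem Fin.ncard_preimage_val_Ico {n a b : ℕ} (hb : b ≤ n) :
    (Fin.val ⁻¹' Set.Ico a b : Set (Fin n)).ncard = b - a := by
  rw [Set.ncard_preimage_of_injective_subset_range Fin.val_injective, Set.ncard_Ico_nat]
  exact fun y hy => ⟨⟨y, by grind⟩, rfl⟩

theorem cycles_of_comp_le_general (α j : ℕ) (hj : j ≤ α - 1)
    (σ₁ σ₂ : Equiv.Perm (Fin (α + j)))
    (h₁c : σ₁.IsCycleOn {x : Fin (α + j) | (x : ℕ) < α})
    (h₁f : ∀ x : Fin (α + j), α ≤ (x : ℕ) → σ₁ x = x)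
    (h₂c : σ₂.IsCycleOn {x : Fin (α + j) | j ≤ (x : ℕ)})
    (h₂f : ∀ x : Fin (α + j), (x : ℕ) < j → σ₂ x = x) :
    (∀ x : Fin (α + j), ∃ n : ℕ,
        j ≤ ((((σ₁ * σ₂) ^ n) x : Fin (α + j)) : ℕ) ∧
        ((((σ₁ * σ₂) ^ n) x : Fin (α + j)) : ℕ) < α) ∧
    Nat.card (Quotient (MulAction.orbitRel (Subgroup.zpowers (σ₁ * σ₂)) (Fin (α + j)))) ≤
      α - j := by
  have hmeet : ∀ x : Fin (α + j), ∃ n : ℕ, ((σ₁ * σ₂) ^ n) x ∈ Fin.val ⁻¹' Set.Ico j α := by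
    intro x
    have hjα : j < α := by have := x.isLt; omega
    have hx : x ∈ {y : Fin (α + j) | (y : ℕ) < α} ∪ {y | j ≤ (y : ℕ)} :=
      (lt_or_ge (x : ℕ) α).imp_right hjα.le.trans
    exact Equiv.Perm.exists_mul_pow_apply_mem_inter h₁c h₂c
      (fun y hy => h₁f y (not_lt.mp hy)) (fun y hy => h₂f y (not_le.mp hy))
      ⟨⟨j, by omega⟩, hjα, le_refl j⟩ hx |>.imp fun _ h => ⟨h.2, h.1⟩
  refine ⟨hmeet, ?_⟩
  calc _ ≤ (Fin.val ⁻¹' Set.Ico j α : Set (Fin (α + j))).ncard :=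
        Equiv.Perm.card_orbitRel_zpowers_le_ncard hmeet
    _ = α - j := Fin.ncard_preimage_val_Ico (by omega)

/-- Let `α ≥ 2` and `0 ≤ j ≤ α-1`. If `σ₁` is a permutation of `{0,…,α+j-1}` acting as a
single cycle on `{0,…,α-1}` and fixing the rest, and `σ₂` acts as a single cycle on
`{j,…,α+j-1}` and fixes the rest, then every orbit of `σ₁ ∘ σ₂` contains an element of
`{j,…,α-1}`, and hence the number of orbits (cycles, counting fixed points) is at most
`α - j`. (This is the 0-based version of the statement about `{1,…,α+j}`.) -/
theorem cycles_of_comp_le (α j : ℕ) (hα : 2 ≤ α) (hj : j ≤ α - 1)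
    (σ₁ σ₂ : Equiv.Perm (Fin (α + j)))
    (h₁c : σ₁.IsCycleOn {x : Fin (α + j) | (x : ℕ) < α})
    (h₁f : ∀ x : Fin (α + j), α ≤ (x : ℕ) → σ₁ x = x)
    (h₂c : σ₂.IsCycleOn {x : Fin (α + j) | j ≤ (x : ℕ)})
    (h₂f : ∀ x : Fin (α + j), (x : ℕ) < j → σ₂ x = x) :
    (∀ x : Fin (α + j), ∃ n : ℕ,
        j ≤ ((((σ₁ * σ₂) ^ n) x : Fin (α + j)) : ℕ) ∧
        ((((σ₁ * σ₂) ^ n) x : Fin (α + j)) : ℕ) < α) ∧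
    Nat.card (Quotient (MulAction.orbitRel (Subgroup.zpowers (σ₁ * σ₂)) (Fin (α + j)))) ≤
      α - j :=
  cycles_of_comp_le_general α j hj σ₁ σ₂ h₁c h₁f h₂c h₂f
end

section
/- Let d and ℓ be positive integers and let η = (η_1,…,η_d) be a probability distribution over [d]. Let x = (x_1 ≥ x_2 ≥ ⋯ ≥ x_ℓ) and y = (y_1 ≥ y_2 ≥ ⋯ ≥ y_ℓ) be nonincreasing tuples of positive integers with Σ_{i=1}^ℓ x_i = Σ_{i=1}^ℓ y_i and such that x majorizes y, i.e., Σ_{i=1}^k x_i ≥ Σ_{i=1}^k y_i for every k ∈ {1,…,ℓ}. Then ∏_{i=1}^ℓ M_{x_i}(η) ≥ ∏_{i=1}^ℓ M_{y_i}(η). -/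
/-!
By Cauchy–Schwarz, `M_{n+1}(η)² ≤ M_n(η) M_{n+2}(η)`, so `n ↦ log M_n(η)` is convex on `ℕ` and
the theorem is Karamata's inequality for it. On `ℕ` a convex function is an affine function plus
a nonnegative combination of the hinges `n ↦ (n - t)⁺`, so it suffices that
`∑ (y i - t)⁺ ≤ ∑ (x i - t)⁺` for every `t`; as `y` is nonincreasing, the indices with `y i > t`
form an initial segment, and there this is the majorization inequality.
-/

open Finset Real

theorem sum_pow_pos {ι R : Type*} [Semiring R] [PartialOrder R] [IsStrictOrderedRing R]
    {s : Finset ι} {η : ι → R} (hη : ∀ i ∈ s, 0 ≤ η i) (hpos : 0 < ∑ i ∈ s, η i) (n : ℕ) :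
    0 < ∑ i ∈ s, η i ^ n := by
  obtain ⟨i, hi, hηi⟩ := exists_ne_zero_of_sum_ne_zero hpos.ne'
  exact sum_pos' (fun j hj => pow_nonneg (hη j hj) n)
    ⟨i, hi, pow_pos ((hη i hi).lt_of_ne' hηi) n⟩

theorem sq_sum_pow_succ_le_sum_pow_mul_sum_pow {ι R : Type*} [CommSemiring R] [LinearOrder R]
    [IsStrictOrderedRing R] [ExistsAddOfLE R] (s : Finset ι) {η : ι → R}
    (hη : ∀ i ∈ s, 0 ≤ η i) (n : ℕ) :
    (∑ i ∈ s, η i ^ (n + 1)) ^ 2 ≤ (∑ i ∈ s, η i ^ n) * ∑ i ∈ s, η i ^ (n + 2) :=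
  sum_sq_le_sum_mul_sum_of_sq_le_mul s (fun i hi => pow_nonneg (hη i hi) _)
    (fun i hi => pow_nonneg (hη i hi) _) (fun i _ => le_of_eq (by ring))

theorem log_sum_pow_succ_sub_le {ι : Type*} {s : Finset ι} {η : ι → ℝ}
    (hη : ∀ i ∈ s, 0 ≤ η i) (hpos : 0 < ∑ i ∈ s, η i) (n : ℕ) :
    log (∑ i ∈ s, η i ^ (n + 1)) - log (∑ i ∈ s, η i ^ n) ≤
      log (∑ i ∈ s, η i ^ (n + 2)) - log (∑ i ∈ s, η i ^ (n + 1)) := by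
  have hM := sum_pow_pos hη hpos
  have := log_le_log (pow_pos (hM (n + 1)) 2) (sq_sum_pow_succ_le_sum_pow_mul_sum_pow s hη n)
  rw [log_pow, log_mul (hM n).ne' (hM (n + 2)).ne'] at this
  push_cast at this
  linarith

/-- Below `N`, `φ` is an affine function plus the hinges `n ↦ n - (t + 1)` weighted by its
second differences. -/
theorem eq_add_sum_mul_tsub (φ : ℕ → ℝ) {N n : ℕ} (hn : n ≤ N) :
    φ n = φ 0 + n * (φ 1 - φ 0) +
      ∑ t ∈ range N, (φ (t + 2) - 2 * φ (t + 1) + φ t) * (n - (t + 1) : ℕ) := by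
  induction n with
  | zero => simp
  | succ n ih =>
    have hstep (t : ℕ) :
        ((n + 1 - (t + 1) : ℕ) : ℝ) = (n - (t + 1) : ℕ) + if t < n then 1 else 0 := by
      split_ifs with h
      · rw [show n + 1 - (t + 1) = n - (t + 1) + 1 by omega]; push_cast; ring
      · rw [show n + 1 - (t + 1) = n - (t + 1) by omega]; simp
    have hrange : (range N).filter (· < n) = range n := by
      ext t; simp only [mem_filter, mem_range]; omega
    have htelescope : ∑ t ∈ range n, (φ (t + 2) - 2 * φ (t + 1) + φ t) =
        (φ (n + 1) - φ n) - (φ 1 - φ 0) := by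
      rw [← sum_range_sub (fun t => φ (t + 1) - φ t)]
      exact sum_congr rfl fun t _ => by ring
    simp only [hstep, mul_add, mul_ite, mul_one, mul_zero, sum_add_distrib, ← sum_filter,
      hrange, htelescope]
    push_cast
    linarith [ih (by omega)]

/-- Karamata's inequality on `ℕ`, with majorization in its hinge form. -/
theorem sum_le_sum_of_sum_tsub_le {ι : Type*} {s : Finset ι} {φ : ℕ → ℝ}
    (hφ : ∀ n, φ (n + 1) - φ n ≤ φ (n + 2) - φ (n + 1)) {x y : ι → ℕ}
    (hxy : ∑ i ∈ s, x i = ∑ i ∈ s, y i) (htail : ∀ t, ∑ i ∈ s, (y i - t) ≤ ∑ i ∈ s, (x i - t)) :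
    ∑ i ∈ s, φ (y i) ≤ ∑ i ∈ s, φ (x i) := by
  set N := ∑ i ∈ s, (x i + y i)
  have hrep (z : ι → ℕ) (hz : ∀ i ∈ s, z i ≤ N) : ∑ i ∈ s, φ (z i) =
      #s * φ 0 + (∑ i ∈ s, z i : ℕ) * (φ 1 - φ 0) +
        ∑ t ∈ range N, (φ (t + 2) - 2 * φ (t + 1) + φ t) * (∑ i ∈ s, (z i - (t + 1)) : ℕ) := by
    rw [sum_congr rfl fun i hi => eq_add_sum_mul_tsub φ (hz i hi)]
    simp only [sum_add_distrib, sum_const, nsmul_eq_mul, Nat.cast_sum, ← sum_mul, mul_sum]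
    rw [sum_comm]
  have hxN (i) (hi : i ∈ s) : x i + y i ≤ N := single_le_sum (f := fun i => x i + y i) (by simp) hi
  rw [hrep y fun i hi => (Nat.le_add_left _ _).trans (hxN i hi),
    hrep x fun i hi => (Nat.le_add_right _ _).trans (hxN i hi), hxy]
  refine add_le_add le_rfl (sum_le_sum fun t _ => mul_le_mul_of_nonneg_left ?_ ?_)
  · exact_mod_cast htail (t + 1)
  · linarith [hφ t]

theorem sum_tsub_le_sum_tsub_of_majorize {ι : Type*} [Fintype ι] [LinearOrder ι] {x y : ι → ℕ}
    (hy : Antitone y)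
    (hmaj : ∀ k, ∑ i ∈ univ.filter (· ≤ k), y i ≤ ∑ i ∈ univ.filter (· ≤ k), x i) (t : ℕ) :
    ∑ i, (y i - t) ≤ ∑ i, (x i - t) := by
  set S := univ.filter fun i => t < y i
  have hSy : ∑ i ∈ S, y i = ∑ i ∈ S, (y i - t) + #S * t := by
    rw [← smul_eq_mul, ← sum_const, ← sum_add_distrib]
    exact sum_congr rfl fun i hi => by have := (mem_filter.1 hi).2; omega
  have hSx : ∑ i ∈ S, x i ≤ ∑ i ∈ S, (x i - t) + #S * t := by
    rw [← smul_eq_mul, ← sum_const, ← sum_add_distrib]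
    exact sum_le_sum fun i _ => le_tsub_add
  have hmajS : ∑ i ∈ S, y i ≤ ∑ i ∈ S, x i := by
    rcases S.eq_empty_or_nonempty with hS | hS
    · simp [hS]
    · have : S = univ.filter (· ≤ S.max' hS) := by
        ext i
        simp only [S, mem_filter, mem_univ, true_and]
        exact ⟨fun hi => S.le_max' i (by simpa [S] using hi), fun hi =>
          (by simpa [S] using S.max'_mem hS : t < y (S.max' hS)).trans_le (hy hi)⟩
      rw [this]
      exact hmaj _
  calc ∑ i, (y i - t) = ∑ i ∈ S, (y i - t) :=
        (sum_filter_of_ne fun i _ h => by omega).symm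
    _ ≤ ∑ i ∈ S, (x i - t) := by omega
    _ ≤ ∑ i, (x i - t) := sum_le_sum_of_subset (filter_subset _ _)

theorem prod_powerSum_le_of_majorize_general (d ℓ : ℕ)
    (η : Fin d → ℝ) (hnn : ∀ i, 0 ≤ η i) (hsum : ∑ i, η i = 1)
    (x y : Fin ℓ → ℕ) (hy : Antitone y)
    (hsumeq : ∑ i, x i = ∑ i, y i)
    (hmaj : ∀ k : Fin ℓ, ∑ i ∈ Finset.univ.filter (· ≤ k), y i ≤
      ∑ i ∈ Finset.univ.filter (· ≤ k), x i) :
    ∏ i, (∑ t, η t ^ (y i)) ≤ ∏ i, (∑ t, η t ^ (x i)) := by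
  have hη : ∀ t ∈ univ, 0 ≤ η t := fun t _ => hnn t
  have hpos : 0 < ∑ t, η t := hsum ▸ one_pos
  have hM := sum_pow_pos hη hpos
  rw [← log_le_log_iff (prod_pos fun i _ => hM _) (prod_pos fun i _ => hM _),
    log_prod fun i _ => (hM _).ne', log_prod fun i _ => (hM _).ne']
  exact sum_le_sum_of_sum_tsub_le (φ := fun n => log (∑ t, η t ^ n))
    (log_sum_pow_succ_sub_le hη hpos) hsumeq
    (sum_tsub_le_sum_tsub_of_majorize hy hmaj)

/-- Monotonicity of products of power sums under majorization: if the partition `x`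
majorizes the partition `y` (both with `ℓ` positive parts and equal sums), then
`∏ M_{x i}(η) ≥ ∏ M_{y i}(η)` for any probability distribution `η` over `[d]`. -/
theorem prod_powerSum_le_of_majorize (d ℓ : ℕ) (hd : 0 < d) (hℓ : 0 < ℓ)
    (η : Fin d → ℝ) (hnn : ∀ i, 0 ≤ η i) (hsum : ∑ i, η i = 1)
    (x y : Fin ℓ → ℕ) (hx : Antitone x) (hy : Antitone y)
    (hxpos : ∀ i, 0 < x i) (hypos : ∀ i, 0 < y i)
    (hsumeq : ∑ i, x i = ∑ i, y i)
    (hmaj : ∀ k : Fin ℓ, ∑ i ∈ Finset.univ.filter (· ≤ k), y i ≤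
      ∑ i ∈ Finset.univ.filter (· ≤ k), x i) :
    ∏ i, (∑ t, η t ^ (y i)) ≤ ∏ i, (∑ t, η t ^ (x i)) :=
  prod_powerSum_le_of_majorize_general d ℓ η hnn hsum x y hy hsumeq hmaj
end

section
/- Let α ≥ 2 be an integer and let d > 2 be an integer with d > (3α)^{2α/(α−1)}. Let ε be a real number with 1/√d < ε < log d. Define the probability distribution η over [d] by η_1 = (1 + (εd)^{1/α})/d and η_i = (1 − (εd)^{1/α}/(d−1))/d for i = 2,…,d, and let u be the uniform distribution over [d] (u_i = 1/d for all i). Then |S_α(u) − S_α(η)| ≥ (1/(α−1)) · log(1 + 2ε/3). -/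
/-!
With `t = (εd)^(1/α)`, the power sums satisfy `d^α ∑ uᵢ^α = d` and
`d^α ∑ ηᵢ^α = (1 + t)^α + (d - 1)(1 - t/(d - 1))^α ≥ (1 + t^α) + (d - 1 - αt)`,
by superadditivity of `x ↦ x^α` and Bernoulli's inequality (valid since `t^α = εd < d log d < d^α`
forces `t < d`). The lower bound on `d` gives `(3α)^(α/(α-1)) < √d < εd`, i.e. `αt ≤ εd/3`.
So the power sums differ by a factor of at least `1 + 2ε/3`, and the entropies by `1/(α-1)`
times its logarithm.
-/

open Finset Real

theorem Fintype.sum_apply_ite_eq {ι α M : Type*} [Fintype ι] [DecidableEq ι] [AddCommMonoid M]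
    (i₀ : ι) (f : α → M) (a b : α) :
    ∑ i, f (if i = i₀ then a else b) = f a + (Fintype.card ι - 1) • f b := by
  rw [Fintype.sum_eq_add_sum_compl i₀, if_pos rfl,
    Finset.sum_congr rfl fun i hi => by rw [if_neg (by simpa using hi)],
    sum_const, card_compl, card_singleton]

theorem rpow_lt_sqrt_of_rpow_two_mul_lt {b x y : ℝ} (hb : 0 ≤ b) (h : b ^ (2 * y) < x) :
    b ^ y < √x := by
  rw [lt_sqrt (rpow_nonneg hb _), ← rpow_natCast, ← rpow_mul hb]
  simpa [mul_comm] using h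

theorem mul_rpow_inv_le_of_rpow_le {a c x : ℝ} (ha : 1 < a) (hc : 0 ≤ c)
    (h : c ^ (a / (a - 1)) ≤ x) : c * x ^ (1 / a) ≤ x := by
  have hx : 0 ≤ x := (rpow_nonneg hc _).trans h
  have ha0 : a ≠ 0 := by positivity
  have ha1 : 0 < a - 1 := by linarith
  have hcx : c ≤ x ^ ((a - 1) / a) := by
    calc c = (c ^ (a / (a - 1))) ^ ((a - 1) / a) := by
          rw [← rpow_mul hc, div_mul_div_cancel₀' ha0, div_self ha1.ne', rpow_one]
      _ ≤ x ^ ((a - 1) / a) := rpow_le_rpow (by positivity) h (by positivity)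
  have hsum : (a - 1) / a + 1 / a = 1 := by field_simp; ring
  calc c * x ^ (1 / a) ≤ x ^ ((a - 1) / a) * x ^ (1 / a) := by gcongr
    _ = x := by rw [← rpow_add' hx (by rw [hsum]; exact one_ne_zero), hsum, rpow_one]

theorem one_add_add_pow_sub_mul_le {m t : ℝ} (hm : 0 < m) (ht₀ : 0 ≤ t) (ht : t ≤ 2 * m)
    {n : ℕ} (hn : n ≠ 0) :
    1 + m + t ^ n - n * t ≤ (1 + t) ^ n + m * (1 - t / m) ^ n := by
  have hsuper : 1 + t ^ n ≤ (1 + t) ^ n := by simpa using pow_add_pow_le zero_le_one ht₀ hn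
  have hbernoulli : 1 + n * (-(t / m)) ≤ (1 - t / m) ^ n := by
    simpa [sub_eq_add_neg] using one_add_mul_le_pow (a := -(t / m))
      (by rw [neg_le_neg_iff, div_le_iff₀ hm]; linarith) n
  have : m - n * t ≤ m * (1 - t / m) ^ n :=
    calc m - n * t = m * (1 + n * (-(t / m))) := by field_simp; ring
      _ ≤ _ := mul_le_mul_of_nonneg_left hbernoulli hm.le
  linarith

noncomputable def renyiEntropy {ι : Type*} [Fintype ι] (α : ℝ) (p : ι → ℝ) : ℝ :=
  1 / (1 - α) * log (∑ i, p i ^ α)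

theorem mul_log_le_renyiEntropy_sub {ι : Type*} [Fintype ι] {α c : ℝ} (hα : 1 < α)
    (hc : 0 < c) {p q : ι → ℝ} (hq : 0 < ∑ i, q i ^ α)
    (h : c * ∑ i, q i ^ α ≤ ∑ i, p i ^ α) :
    1 / (α - 1) * log c ≤ renyiEntropy α q - renyiEntropy α p := by
  have hlog : log c + log (∑ i, q i ^ α) ≤ log (∑ i, p i ^ α) := by
    rw [← log_mul hc.ne' hq.ne']
    exact log_le_log (by positivity) h
  have hdiff : renyiEntropy α q - renyiEntropy α p
      = 1 / (α - 1) * (log (∑ i, p i ^ α) - log (∑ i, q i ^ α)) := by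
    have : 1 - α ≠ 0 := by linarith
    have : α - 1 ≠ 0 := by linarith
    unfold renyiEntropy
    field_simp
    ring
  rw [hdiff]
  exact mul_le_mul_of_nonneg_left (by linarith) (one_div_nonneg.2 (by linarith))

theorem mul_rpow_one_div_lt_self {n : ℕ} (hn : 2 ≤ n) {x ε : ℝ} (hx : 0 < x) (hε₀ : 0 ≤ ε)
    (hε : ε < log x) : (ε * x) ^ (1 / (n : ℝ)) < x := by
  have hx₁ : 1 ≤ x := ((log_pos_iff hx.le).1 (hε₀.trans_lt hε)).le
  rw [one_div, rpow_inv_lt_iff_of_pos (by positivity) hx.le (by positivity), rpow_natCast]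
  calc ε * x < x * x := by nlinarith [log_le_sub_one_of_pos hx]
    _ = x ^ 2 := by ring
    _ ≤ x ^ n := pow_le_pow_right₀ hx₁ hn

noncomputable def perturbedUniform {d : ℕ} (i₀ : Fin d) (t : ℝ) : Fin d → ℝ := fun i =>
  if i = i₀ then (1 + t) / d else (1 - t / (d - 1)) / d

theorem div_pow_le_sum_rpow_perturbedUniform {d : ℕ} (hd : 1 < d) (i₀ : Fin d) {t : ℝ}
    (ht₀ : 0 ≤ t) (ht : t ≤ 2 * (d - 1)) {n : ℕ} (hn : n ≠ 0) :
    (d + t ^ n - n * t) / d ^ n ≤ ∑ i, perturbedUniform i₀ t i ^ (n : ℝ) := by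
  have hd₁ : (1 : ℝ) < d := by exact_mod_cast hd
  unfold perturbedUniform
  rw [Fintype.sum_apply_ite_eq _ (· ^ (n : ℝ)), Fintype.card_fin, nsmul_eq_mul,
    Nat.cast_sub hd.le]
  simp only [rpow_natCast, div_pow, Nat.cast_one, ← mul_div_assoc, ← add_div]
  gcongr
  linarith [one_add_add_pow_sub_mul_le (sub_pos.2 hd₁) ht₀ ht hn]

/-- The two spectra `η` (a perturbation of uniform) and `u` (uniform) over `[d]` have
Rényi entropies of order `α` differing by at least `(1/(α-1))·log(1 + 2ε/3)`, whenever
`α ≥ 2` is an integer, `d > 2`, `d > (3α)^(2α/(α-1))`, and `1/√d < ε < log d`. -/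
theorem renyi_entropy_gap (α : ℕ) (hα : 2 ≤ α) (d : ℕ) (hd2 : 2 < d)
    (hd : ((3 * α : ℕ) : ℝ) ^ ((2 * (α : ℝ)) / ((α : ℝ) - 1)) < (d : ℝ))
    (ε : ℝ) (hε1 : 1 / Real.sqrt d < ε) (hε2 : ε < Real.log d) :
    let η : Fin d → ℝ := fun i =>
      if i = ⟨0, by omega⟩ then (1 + (ε * d) ^ (1 / (α : ℝ))) / d
      else (1 - (ε * d) ^ (1 / (α : ℝ)) / ((d : ℝ) - 1)) / d
    let u : Fin d → ℝ := fun _ => 1 / d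
    let Sα : (Fin d → ℝ) → ℝ := fun p => (1 / (1 - (α : ℝ))) * Real.log (∑ i, p i ^ (α : ℝ))
    (1 / ((α : ℝ) - 1)) * Real.log (1 + 2 * ε / 3) ≤ |Sα u - Sα η| := by
  intro η u Sα
  have hd0 : (0 : ℝ) < d := by positivity
  have hd1 : (2 : ℝ) < d := by exact_mod_cast hd2
  have hα1 : (1 : ℝ) < α := by exact_mod_cast hα
  have hε0 : 0 < ε := (one_div_pos.2 (sqrt_pos.2 hd0)).trans hε1
  have hεd : 0 < ε * d := by positivity
  have hsqrt : √d < ε * d := by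
    simpa only [one_div_mul_eq_div, div_sqrt] using mul_lt_mul_of_pos_right hε1 hd0
  set t := (ε * d) ^ (1 / (α : ℝ))
  have ht₀ : 0 ≤ t := rpow_nonneg hεd.le _
  have htα : t ^ α = ε * d := by
    rw [← rpow_natCast, ← rpow_mul hεd.le, one_div_mul_cancel (by positivity), rpow_one]
  have hαt : α * t ≤ ε * d / 3 := by
    have h3α : ((3 * α : ℕ) : ℝ) ^ ((α : ℝ) / (α - 1)) < √d :=
      rpow_lt_sqrt_of_rpow_two_mul_lt (by positivity) (by rwa [← mul_div_assoc])
    have := mul_rpow_inv_le_of_rpow_le hα1 (by positivity) (h3α.trans hsqrt).le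
    push_cast at this
    linarith
  have htd : t ≤ 2 * (d - 1) := by
    linarith [mul_rpow_one_div_lt_self hα hd0 hε0.le hε2]
  have hu : ∑ i, u i ^ (α : ℝ) = d / d ^ α := by
    simp [u, div_eq_mul_inv]
  have hη := div_pow_le_sum_rpow_perturbedUniform (by omega) ⟨0, by omega⟩ ht₀ htd
    (n := α) (by omega)
  show 1 / ((α : ℝ) - 1) * log (1 + 2 * ε / 3) ≤ |renyiEntropy α u - renyiEntropy α η|
  refine (mul_log_le_renyiEntropy_sub hα1 (by positivity) (by rw [hu]; positivity) ?_).trans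
    (le_abs_self _)
  calc (1 + 2 * ε / 3) * ∑ i, u i ^ (α : ℝ) = (d + ε * d - ε * d / 3) / d ^ α := by
        rw [hu]; ring
    _ ≤ (d + t ^ α - α * t) / d ^ α := by rw [htα]; gcongr
    _ ≤ ∑ i, η i ^ (α : ℝ) := hη
end

section
/- Let m ≥ 2 be an integer and let μ be a partition of m, with the convention μ_i = 0 for i > ℓ(μ). Then ∏_{i=1}^∞ (μ_i − μ_{i+1} + 1) < m^{√(2m)}, where all but finitely many factors of the product equal 1 and the right-hand side uses the real exponent √(2m). -/
/-!
Write `dᵢ = μᵢ - μᵢ₊₁` and let `D` be the set of indices with `dᵢ ≠ 0`, so that the product is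
`∏_{i ∈ D} (dᵢ + 1)`. Abel summation gives `∑ (i + 1) dᵢ = m`, so the `k = #D` distinct values
`i + 1`, `i ∈ D`, sum to at most `m`, whence `k (k + 1) ≤ 2m` and `k < √(2m)`. If `k ≥ 2`, each
factor is at most `m`, because another index of `D` contributes at least `1` to the weighted sum,
so the product is at most `m ^ k < m ^ √(2m)`. If `k ≤ 1`, the product is at most
`m + 1 < m ^ 2 ≤ m ^ √(2m)`.
-/

open Finset

theorem Finset.card_mul_card_add_one_le_two_mul_sum (s : Finset ℕ) :
    #s * (#s + 1) ≤ 2 * ∑ i ∈ s, (i + 1) := by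
  induction s using Finset.induction_on_max with
  | empty => simp
  | insert a s ha ih =>
    have ha' : a ∉ s := fun h => lt_irrefl a (ha a h)
    have hcard : #s ≤ a := by
      simpa using card_le_card fun x hx => mem_range.mpr (ha x hx)
    rw [sum_insert ha', card_insert_of_notMem ha']
    nlinarith

theorem Antitone.sum_range_add_one_mul_sub {μ : ℕ → ℕ} (hμ : Antitone μ) (N : ℕ) :
    ∑ i ∈ range N, (i + 1) * (μ i - μ (i + 1)) + N * μ N = ∑ i ∈ range N, μ i := by
  induction N with
  | zero => simp
  | succ n ih =>
    have hsub : μ (n + 1) ≤ μ n := hμ n.le_succ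
    rw [sum_range_succ, sum_range_succ, ← ih]
    zify [hsub]
    ring

section WeightedSum

variable {D : Finset ℕ} {d : ℕ → ℕ} {m : ℕ}

theorem card_mul_card_add_one_le_of_sum_mul_le (hpos : ∀ i ∈ D, d i ≠ 0)
    (hsum : ∑ i ∈ D, (i + 1) * d i ≤ m) : #D * (#D + 1) ≤ 2 * m := by
  have : ∑ i ∈ D, (i + 1) ≤ ∑ i ∈ D, (i + 1) * d i :=
    sum_le_sum fun i hi => Nat.le_mul_of_pos_right _ (Nat.pos_of_ne_zero (hpos i hi))
  have := D.card_mul_card_add_one_le_two_mul_sum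
  omega

theorem le_of_sum_mul_le (hsum : ∑ i ∈ D, (i + 1) * d i ≤ m) {i : ℕ} (hi : i ∈ D) :
    d i ≤ m :=
  calc d i ≤ (i + 1) * d i := Nat.le_mul_of_pos_left _ i.succ_pos
    _ ≤ ∑ j ∈ D, (j + 1) * d j :=
      single_le_sum (f := fun j => (j + 1) * d j) (fun _ _ => Nat.zero_le _) hi
    _ ≤ m := hsum

theorem add_one_le_of_sum_mul_le (hpos : ∀ i ∈ D, d i ≠ 0)
    (hsum : ∑ i ∈ D, (i + 1) * d i ≤ m) {i j : ℕ} (hi : i ∈ D) (hj : j ∈ D) (hij : i ≠ j) :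
    d i + 1 ≤ m := by
  have hpair : (i + 1) * d i + (j + 1) * d j ≤ m :=
    calc (i + 1) * d i + (j + 1) * d j = ∑ k ∈ {i, j}, (k + 1) * d k :=
          (sum_pair (f := fun k => (k + 1) * d k) hij).symm
      _ ≤ ∑ k ∈ D, (k + 1) * d k :=
          sum_le_sum_of_subset (insert_subset hi (singleton_subset_iff.mpr hj))
      _ ≤ m := hsum
  have : d i ≤ (i + 1) * d i := Nat.le_mul_of_pos_left _ i.succ_pos
  have : 1 ≤ (j + 1) * d j := Nat.mul_pos j.succ_pos (Nat.pos_of_ne_zero (hpos j hj))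
  omega

theorem prod_add_one_lt_rpow_sqrt_of_ne_zero (hm : 2 ≤ m) (hpos : ∀ i ∈ D, d i ≠ 0)
    (hsum : ∑ i ∈ D, (i + 1) * d i ≤ m) :
    ((∏ i ∈ D, (d i + 1) : ℕ) : ℝ) < (m : ℝ) ^ Real.sqrt (2 * m) := by
  have hm2 : (2 : ℝ) ≤ m := by exact_mod_cast hm
  have hm1 : (1 : ℝ) < m := by linarith
  have hcard := card_mul_card_add_one_le_of_sum_mul_le hpos hsum
  rcases le_or_gt #D 1 with hD | hD
  · have hprod : ∏ i ∈ D, (d i + 1) ≤ m + 1 :=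
      calc ∏ i ∈ D, (d i + 1) ≤ (m + 1) ^ #D :=
            prod_le_pow_card _ _ _ fun i hi => Nat.succ_le_succ (le_of_sum_mul_le hsum hi)
        _ ≤ (m + 1) ^ 1 := Nat.pow_le_pow_right m.succ_pos hD
        _ = m + 1 := pow_one _
    have hsqrt : (2 : ℝ) ≤ Real.sqrt (2 * m) := by
      rw [Real.le_sqrt zero_le_two (by positivity)]
      linarith
    calc ((∏ i ∈ D, (d i + 1) : ℕ) : ℝ) ≤ m + 1 := by exact_mod_cast hprod
      _ < (m : ℝ) ^ (2 : ℝ) := by rw [Real.rpow_two]; nlinarith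
      _ ≤ (m : ℝ) ^ Real.sqrt (2 * m) := Real.rpow_le_rpow_of_exponent_le hm1.le hsqrt
  · have hprod : ∏ i ∈ D, (d i + 1) ≤ m ^ #D := prod_le_pow_card _ _ _ fun i hi => by
      obtain ⟨j, hj, hji⟩ := exists_mem_ne hD i
      exact add_one_le_of_sum_mul_le hpos hsum hi hj hji.symm
    have hsqrt : (#D : ℝ) < Real.sqrt (2 * m) := by
      rw [Real.lt_sqrt (by positivity)]
      exact_mod_cast (by nlinarith : #D ^ 2 < 2 * m)
    calc ((∏ i ∈ D, (d i + 1) : ℕ) : ℝ) ≤ (m : ℝ) ^ (#D : ℝ) := by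
          rw [Real.rpow_natCast]; exact_mod_cast hprod
      _ < (m : ℝ) ^ Real.sqrt (2 * m) := Real.rpow_lt_rpow_of_exponent_lt hm1 hsqrt

end WeightedSum

theorem prod_add_one_lt_rpow_sqrt {s : Finset ℕ} {d : ℕ → ℕ} {m : ℕ} (hm : 2 ≤ m)
    (hsum : ∑ i ∈ s, (i + 1) * d i ≤ m) :
    ((∏ i ∈ s, (d i + 1) : ℕ) : ℝ) < (m : ℝ) ^ Real.sqrt (2 * m) := by
  rw [← prod_filter_of_ne (p := fun i => d i ≠ 0) fun i _ hi => by omega]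
  exact prod_add_one_lt_rpow_sqrt_of_ne_zero hm (fun i hi => (mem_filter.mp hi).2)
    ((sum_le_sum_of_subset (filter_subset _ s)).trans hsum)

/-- For a partition `μ` of an integer `m ≥ 2` (a nonincreasing, finitely supported
sequence `μ : ℕ → ℕ` with `∑ᶠ i, μ i = m`, indexed from 0), we have
`∏_i (μ_i - μ_{i+1} + 1) < m^√(2m)`. -/
theorem prod_diff_lt (m : ℕ) (hm : 2 ≤ m) (μ : ℕ → ℕ) (hμ : Antitone μ)
    (hfin : (Function.support μ).Finite) (hsum : ∑ᶠ i, μ i = m) :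
    ((∏ᶠ i, (μ i - μ (i + 1) + 1) : ℕ) : ℝ) < (m : ℝ) ^ Real.sqrt (2 * m) := by
  obtain ⟨B, hB⟩ := hfin.bddAbove
  have hzero : ∀ i, B + 1 ≤ i → μ i = 0 := fun i hi =>
    Function.notMem_support.mp fun h => by have := hB h; omega
  have hsupp : Function.support μ ⊆ range (B + 1) := fun i hi => by
    simpa using Nat.lt_succ_of_le (hB hi)
  have hmsupp : Function.mulSupport (fun i => μ i - μ (i + 1) + 1) ⊆ range (B + 1) :=
    fun i hi => by
      by_contra h
      simp only [coe_range, Set.mem_Iio, not_lt] at h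
      simp [hzero i h, hzero (i + 1) (by omega)] at hi
  rw [finsum_eq_sum_of_support_subset μ hsupp] at hsum
  have hweighted : ∑ i ∈ range (B + 1), (i + 1) * (μ i - μ (i + 1)) = m := by
    have := hμ.sum_range_add_one_mul_sub (B + 1)
    rwa [hzero (B + 1) le_rfl, mul_zero, add_zero, hsum] at this
  rw [finprod_eq_prod_of_mulSupport_subset _ hmsupp]
  exact prod_add_one_lt_rpow_sqrt hm hweighted.le
end

section
/- Let d be a positive integer and let x_1,…,x_d be real numbers satisfying Σ_{i=1}^d x_i = 0 and Σ_{i=1}^d x_i^2 ≤ 4. Then Σ_{i=1}^d x_i · log(1/x_i^2) ≤ (16/e)·√d, where a term with x_i = 0 is interpreted as 0. -/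
/-!
Since `x log(1/x²) = -2 x log x`, the bound `log v ≤ v / e` (which is `log w ≤ w - 1` at
`w = v / e`) gives `x log(1/x²) ≤ x² + 2/e` pointwise, and rescaling by `t > 0` gives
`x log(1/x²) ≤ x²/t + 2t/e + x log(1/t²)`. Summing, the last term vanishes because `∑ xᵢ = 0`,
leaving `4/t + 2dt/e`; the choice `t = 2/√d` makes this `(2 + 4/e)√d ≤ (16/e)√d`, as `e ≤ 6`.
-/

open Real Finset

lemma Real.log_le_div_exp_one {v : ℝ} (hv : 0 < v) : log v ≤ v / exp 1 := by
  have h := log_le_sub_one_of_pos (div_pos hv (exp_pos 1))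
  rw [log_div hv.ne' (exp_pos 1).ne', log_exp] at h
  linarith

lemma Real.negMulLog_le_inv_exp_one {u : ℝ} (hu : 0 ≤ u) : negMulLog u ≤ (exp 1)⁻¹ := by
  rcases hu.eq_or_lt with rfl | hu
  · simp [(exp_pos 1).le]
  calc negMulLog u = u * log u⁻¹ := by rw [negMulLog, log_inv]; ring
    _ ≤ u * (u⁻¹ / exp 1) := by gcongr; exact log_le_div_exp_one (inv_pos.2 hu)
    _ = (exp 1)⁻¹ := by field_simp

lemma Real.mul_log_le_sq_div_exp_one {u : ℝ} (hu : 0 ≤ u) : u * log u ≤ u ^ 2 / exp 1 := by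
  rcases hu.eq_or_lt with rfl | hu
  · simp
  calc u * log u ≤ u * (u / exp 1) := by gcongr; exact log_le_div_exp_one hu
    _ = u ^ 2 / exp 1 := by ring

lemma Real.mul_log_one_div_sq (x : ℝ) : x * log (1 / x ^ 2) = -2 * (x * log x) := by
  rw [one_div, log_inv, log_pow]; push_cast; ring

lemma Real.mul_log_one_div_sq_le (u : ℝ) : u * log (1 / u ^ 2) ≤ u ^ 2 + 2 / exp 1 := by
  rw [mul_log_one_div_sq]
  rcases le_total 0 u with hu | hu
  · have h := negMulLog_le_inv_exp_one hu
    rw [negMulLog] at h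
    linarith [sq_nonneg u, show 2 / exp 1 = 2 * (exp 1)⁻¹ by ring]
  · have h := mul_log_le_sq_div_exp_one (neg_nonneg.2 hu)
    rw [log_neg_eq_log, neg_sq] at h
    have he : 2 ≤ exp 1 := by linarith [add_one_le_exp (1 : ℝ)]
    have hdiv : u ^ 2 / exp 1 ≤ u ^ 2 / 2 := div_le_div_of_nonneg_left (sq_nonneg u) two_pos he
    linarith [(by positivity : 0 ≤ 2 / exp 1)]

lemma Real.mul_log_one_div_sq_le_add_mul_log {t : ℝ} (ht : 0 < t) (x : ℝ) :
    x * log (1 / x ^ 2) ≤ x ^ 2 / t + 2 * t / exp 1 + x * log (1 / t ^ 2) := by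
  rcases eq_or_ne x 0 with rfl | hx
  · simpa using (by positivity : (0 : ℝ) ≤ 2 * t / exp 1)
  have hscale : x * log (1 / x ^ 2) =
      t * ((x / t) * log (1 / (x / t) ^ 2)) + x * log (1 / t ^ 2) := by
    simp only [one_div, log_inv, log_pow, log_div hx ht.ne']
    field_simp
    ring
  have h := mul_le_mul_of_nonneg_left (mul_log_one_div_sq_le (x / t)) ht.le
  have ht' : t * ((x / t) ^ 2 + 2 / exp 1) = x ^ 2 / t + 2 * t / exp 1 := by field_simp
  linarith

lemma Real.sum_mul_log_one_div_sq_le {ι : Type*} [Fintype ι] {x : ι → ℝ} (hx : ∑ i, x i = 0)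
    {t : ℝ} (ht : 0 < t) :
    ∑ i, x i * log (1 / x i ^ 2) ≤ (∑ i, x i ^ 2) / t + Fintype.card ι * (2 * t / exp 1) :=
  calc ∑ i, x i * log (1 / x i ^ 2)
      ≤ ∑ i, (x i ^ 2 / t + 2 * t / exp 1 + x i * log (1 / t ^ 2)) :=
        sum_le_sum fun i _ => mul_log_one_div_sq_le_add_mul_log ht (x i)
    _ = (∑ i, x i ^ 2) / t + Fintype.card ι * (2 * t / exp 1)
          + (∑ i, x i) * log (1 / t ^ 2) := by
        rw [sum_add_distrib, sum_add_distrib, sum_div, sum_const, card_univ, sum_mul, nsmul_eq_mul]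
    _ = (∑ i, x i ^ 2) / t + Fintype.card ι * (2 * t / exp 1) := by rw [hx]; ring

/-- If `x_1,…,x_d` are reals with `∑ x_i = 0` and `∑ x_i² ≤ 4`, then
`∑ x_i · log(1/x_i²) ≤ (16/e)·√d` (a term with `x_i = 0` is `0`, which
is automatic since in Lean `log (1/0) = 0`). -/
theorem sum_xlog_le (d : ℕ) (hd : 0 < d) (x : Fin d → ℝ)
    (hsum : ∑ i, x i = 0) (hsq : ∑ i, (x i) ^ 2 ≤ 4) :
    ∑ i, x i * Real.log (1 / (x i) ^ 2) ≤ (16 / Real.exp 1) * Real.sqrt d := by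
  have hd' : (d : ℝ) = √d ^ 2 := (sq_sqrt (Nat.cast_nonneg d)).symm
  set s := √(d : ℝ)
  have hs : 0 < s := sqrt_pos.2 (Nat.cast_pos.2 hd)
  have he : exp 1 ≤ 6 := by linarith [exp_one_lt_d9]
  calc ∑ i, x i * log (1 / x i ^ 2)
      ≤ (∑ i, x i ^ 2) / (2 / s) + d * (2 * (2 / s) / exp 1) := by
        simpa using sum_mul_log_one_div_sq_le hsum (div_pos two_pos hs)
    _ ≤ 4 / (2 / s) + d * (2 * (2 / s) / exp 1) := by gcongr
    _ = (2 + 4 / exp 1) * s := by rw [hd']; field_simp; ring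
    _ ≤ (16 / exp 1) * s := by
        gcongr
        rw [le_div_iff₀ (exp_pos 1), add_mul, div_mul_cancel₀ _ (exp_pos 1).ne']
        linarith
end

section
/- Let n and d be positive integers, and let λ = (λ_1 ≥ λ_2 ≥ ⋯ ≥ λ_d ≥ 0) and λ' = (λ'_1 ≥ λ'_2 ≥ ⋯ ≥ λ'_d ≥ 0) be nonincreasing tuples of nonnegative integers with Σ_{i=1}^d λ_i = Σ_{i=1}^d λ'_i = n, and suppose that |Σ_{i=1}^j (λ_i − λ'_i)| ≤ 1 for every j ∈ {1,…,d}. Define Z(λ) = Σ_{i=1}^d |λ_i/n − 1/d|. Then |Z(λ) − Z(λ')| ≤ 14/n. -/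
/-!
Put `f = λ/n - 1/d` and `g = λ'/n - 1/d`: both sum to zero, both are nonincreasing, and their
prefix sums differ by at most `ε = 1/n`. For a zero-sum vector the ℓ1 norm is twice the sum of the
positive parts, and the nonnegative entries of a nonincreasing `f` form an initial segment, so
`∑ f⁺` is a prefix sum of `f`. It is therefore at most the same prefix sum of `g` plus `ε`, hence
at most `∑ g⁺ + ε`. So `∑ |f| ≤ ∑ |g| + 2ε`, and by symmetry `|Z(λ) - Z(λ')| ≤ 2/n`.
-/

open Finset

theorem Finset.sum_posPart_eq_sum_filter_nonneg {ι α : Type*} [AddCommGroup α] [LinearOrder α]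
    (s : Finset ι) (f : ι → α) : ∑ i ∈ s, (f i)⁺ = ∑ i ∈ s with 0 ≤ f i, f i := by
  rw [sum_filter]
  exact sum_congr rfl fun i _ => posPart_eq_ite

section PosPart

variable {ι α : Type*} [AddCommGroup α] [LinearOrder α] [IsOrderedAddMonoid α]

theorem Finset.sum_abs_eq_two_nsmul_sum_posPart (s : Finset ι) (f : ι → α)
    (hf : ∑ i ∈ s, f i = 0) : ∑ i ∈ s, |f i| = 2 • ∑ i ∈ s, (f i)⁺ := by
  rw [← add_zero (∑ i ∈ s, |f i|), ← hf, ← sum_add_distrib, smul_sum]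
  exact sum_congr rfl fun i _ => abs_add_eq_two_nsmul_posPart (f i)

theorem Finset.sum_le_sum_posPart {s t : Finset ι} (hst : s ⊆ t) (f : ι → α) :
    ∑ i ∈ s, f i ≤ ∑ i ∈ t, (f i)⁺ :=
  (sum_le_sum fun i _ => le_posPart (f i)).trans
    (sum_le_sum_of_subset_of_nonneg hst fun i _ _ => posPart_nonneg (f i))

end PosPart

theorem Antitone.filter_nonneg_eq_empty_or_eq_filter_le {ι α : Type*} [Fintype ι] [LinearOrder ι]
    [Zero α] [LinearOrder α] {f : ι → α} (hf : Antitone f) :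
    univ.filter (fun i => 0 ≤ f i) = ∅ ∨
      ∃ j, univ.filter (fun i => 0 ≤ f i) = univ.filter (· ≤ j) := by
  rcases (univ.filter fun i => 0 ≤ f i).eq_empty_or_nonempty with hempty | hne
  · exact Or.inl hempty
  refine Or.inr ⟨(univ.filter fun i => 0 ≤ f i).max' hne, ?_⟩
  have hmax := (mem_filter.1 (max'_mem _ hne)).2
  ext i
  simp only [mem_filter, mem_univ, true_and]
  exact ⟨fun hi => le_max' _ i (mem_filter.2 ⟨mem_univ i, hi⟩), fun hi => hmax.trans (hf hi)⟩

section Antitone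

variable {ι α : Type*} [Fintype ι] [LinearOrder ι]
  [AddCommGroup α] [LinearOrder α] [IsOrderedAddMonoid α] {f g : ι → α}

theorem Antitone.sum_posPart_le_of_prefix_sum_le (hf : Antitone f) {ε : α} (hε : 0 ≤ ε)
    (h : ∀ j, ∑ i ∈ univ.filter (· ≤ j), f i ≤ ∑ i ∈ univ.filter (· ≤ j), g i + ε) :
    ∑ i, (f i)⁺ ≤ ∑ i, (g i)⁺ + ε := by
  rw [sum_posPart_eq_sum_filter_nonneg]
  rcases hf.filter_nonneg_eq_empty_or_eq_filter_le with hempty | ⟨j, hj⟩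
  · rw [hempty, sum_empty]
    exact add_nonneg (sum_nonneg fun i _ => posPart_nonneg (g i)) hε
  · rw [hj]
    exact (h j).trans (add_le_add_left (sum_le_sum_posPart (subset_univ _) g) ε)

theorem Antitone.sum_abs_le_of_prefix_sum_le (hf : Antitone f) (hf0 : ∑ i, f i = 0)
    (hg0 : ∑ i, g i = 0) {ε : α} (hε : 0 ≤ ε)
    (h : ∀ j, ∑ i ∈ univ.filter (· ≤ j), f i ≤ ∑ i ∈ univ.filter (· ≤ j), g i + ε) :
    ∑ i, |f i| ≤ ∑ i, |g i| + 2 • ε := by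
  rw [sum_abs_eq_two_nsmul_sum_posPart _ f hf0, sum_abs_eq_two_nsmul_sum_posPart _ g hg0,
    ← smul_add]
  exact nsmul_le_nsmul_right (hf.sum_posPart_le_of_prefix_sum_le hε h) 2

theorem abs_sum_abs_sub_sum_abs_le_of_abs_prefix_sum_sub_le (hf : Antitone f) (hg : Antitone g)
    (hf0 : ∑ i, f i = 0) (hg0 : ∑ i, g i = 0) {ε : α} (hε : 0 ≤ ε)
    (h : ∀ j, |∑ i ∈ univ.filter (· ≤ j), f i - ∑ i ∈ univ.filter (· ≤ j), g i| ≤ ε) :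
    |(∑ i, |f i|) - (∑ i, |g i|)| ≤ 2 • ε :=
  abs_sub_le_iff.2
    ⟨sub_le_iff_le_add'.2 <| hf.sum_abs_le_of_prefix_sum_le hf0 hg0 hε fun j =>
        sub_le_iff_le_add'.1 (abs_sub_le_iff.1 (h j)).1,
      sub_le_iff_le_add'.2 <| hg.sum_abs_le_of_prefix_sum_le hg0 hf0 hε fun j =>
        sub_le_iff_le_add'.1 (abs_sub_le_iff.1 (h j)).2⟩

end Antitone

theorem sum_natCast_div_sub_one_div_eq_zero {n d : ℕ} (hn : n ≠ 0) (l : Fin d → ℕ)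
    (hl : ∑ i, l i = n) : ∑ i, ((l i : ℝ) / n - 1 / d) = 0 := by
  rcases eq_or_ne d 0 with rfl | hd
  · simp
  rw [sum_sub_distrib, ← sum_div, ← Nat.cast_sum, hl]
  simp [hn, hd]

theorem Z_lipschitz_general (n d : ℕ) (hn : 0 < n)
    (lam lam' : Fin d → ℕ) (h1 : Antitone lam) (h2 : Antitone lam')
    (hs1 : ∑ i, lam i = n) (hs2 : ∑ i, lam' i = n)
    (hdiff : ∀ j : Fin d,
      |∑ i ∈ Finset.univ.filter (· ≤ j), ((lam i : ℝ) - (lam' i : ℝ))| ≤ 1) :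
    |(∑ i, |(lam i : ℝ) / n - 1 / d|) - (∑ i, |(lam' i : ℝ) / n - 1 / d|)| ≤ 14 / n := by
  have hn' : (0 : ℝ) < n := by exact_mod_cast hn
  set f : Fin d → ℝ := fun i => (lam i : ℝ) / n - 1 / d
  set g : Fin d → ℝ := fun i => (lam' i : ℝ) / n - 1 / d
  have hanti : ∀ l : Fin d → ℕ, Antitone l → Antitone fun i => (l i : ℝ) / n - 1 / d :=
    fun l hl i j hij => by dsimp only; gcongr; exact hl hij
  have hprefix (j : Fin d) :
      |∑ i ∈ univ.filter (· ≤ j), f i - ∑ i ∈ univ.filter (· ≤ j), g i| ≤ 1 / n := by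
    rw [← sum_sub_distrib]
    simp only [f, g, sub_sub_sub_cancel_right, ← sub_div, ← sum_div, abs_div, abs_of_pos hn']
    exact div_le_div_of_nonneg_right (hdiff j) hn'.le
  refine (abs_sum_abs_sub_sum_abs_le_of_abs_prefix_sum_sub_le (hanti lam h1) (hanti lam' h2)
    (sum_natCast_div_sub_one_div_eq_zero hn.ne' lam hs1)
    (sum_natCast_div_sub_one_div_eq_zero hn.ne' lam' hs2) (by positivity) hprefix).trans ?_
  rw [nsmul_eq_mul, mul_one_div]
  gcongr
  norm_num

/-- If `λ` and `λ'` are nonincreasing tuples of nonnegative integers summing to `n` whose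
prefix sums differ by at most 1 everywhere, then the ℓ1 distances of `λ/n` and `λ'/n` from
the uniform distribution over `[d]` differ by at most `14/n`. -/
theorem Z_lipschitz (n d : ℕ) (hn : 0 < n) (hd : 0 < d)
    (lam lam' : Fin d → ℕ) (h1 : Antitone lam) (h2 : Antitone lam')
    (hs1 : ∑ i, lam i = n) (hs2 : ∑ i, lam' i = n)
    (hdiff : ∀ j : Fin d,
      |∑ i ∈ Finset.univ.filter (· ≤ j), ((lam i : ℝ) - (lam' i : ℝ))| ≤ 1) :
    |(∑ i, |(lam i : ℝ) / n - 1 / d|) - (∑ i, |(lam' i : ℝ) / n - 1 / d|)| ≤ 14 / n :=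
  Z_lipschitz_general n d hn lam lam' h1 h2 hs1 hs2 hdiff
end

section
/- Let d be a positive integer, let p = (p_1,…,p_d) be a probability distribution over [d], let γ ≥ 0 be defined by Σ_{i=1}^d |p_i − 1/d| = 2γ, and let 0 < α < 1 be a real number. Then Σ_{i=1}^d p_i^α ≤ (1 − α(1−α)·γ²) · d^{1−α}. -/
/-!
Write `u = 1/d` for the uniform distribution. Applying weighted AM–GM to `√pᵢ` and `√u` and
squaring gives `pᵢ^α u^(1-α) ≤ α pᵢ + (1-α) u - α(1-α)(√pᵢ - √u)²`; summing, the Bhattacharyya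
coefficient `∑ pᵢ^α u^(1-α)` is at most `1 - α(1-α) H²`, where `H² = ∑ (√pᵢ - √u)²` is the squared
Hellinger distance. Cauchy–Schwarz on `|pᵢ - u| = |√pᵢ - √u| (√pᵢ + √u)` bounds the total
variation distance by the Hellinger one, `γ² ≤ H²`.
-/

open Finset Real

/-- Weighted AM–GM with the exact quadratic remainder that squaring the AM–GM for square roots
produces. -/
theorem Real.rpow_mul_rpow_le_sub_sq_sqrt_sub {a b α : ℝ} (ha : 0 ≤ a) (hb : 0 ≤ b)
    (hα0 : 0 ≤ α) (hα1 : α ≤ 1) :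
    a ^ α * b ^ (1 - α) ≤ α * a + (1 - α) * b - α * (1 - α) * (√a - √b) ^ 2 := by
  have amgm : √a ^ α * √b ^ (1 - α) ≤ α * √a + (1 - α) * √b :=
    geom_mean_le_arith_mean2_weighted hα0 (by linarith) (sqrt_nonneg a) (sqrt_nonneg b)
      (by ring)
  have h_sq : a ^ α * b ^ (1 - α) = (√a ^ α * √b ^ (1 - α)) ^ 2 := by
    rw [sq, mul_mul_mul_comm, ← mul_rpow (sqrt_nonneg a) (sqrt_nonneg a),
      ← mul_rpow (sqrt_nonneg b) (sqrt_nonneg b), mul_self_sqrt ha, mul_self_sqrt hb]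
  have h_nonneg : 0 ≤ √a ^ α * √b ^ (1 - α) :=
    mul_nonneg (rpow_nonneg (sqrt_nonneg a) α) (rpow_nonneg (sqrt_nonneg b) _)
  rw [h_sq]
  nlinarith [sq_sqrt ha, sq_sqrt hb, pow_le_pow_left₀ h_nonneg amgm 2]

theorem Finset.sq_sum_abs_sub_le_mul_sum_sq_sqrt_sub {ι : Type*} (s : Finset ι) {a b : ι → ℝ}
    (ha : ∀ i, 0 ≤ a i) (hb : ∀ i, 0 ≤ b i) :
    (∑ i ∈ s, |a i - b i|) ^ 2 ≤ (∑ i ∈ s, (√(a i) - √(b i)) ^ 2) * (2 * ∑ i ∈ s, (a i + b i)) := by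
  have h_factor : ∀ i, |a i - b i| = |√(a i) - √(b i)| * (√(a i) + √(b i)) := fun i => by
    rw [← abs_of_nonneg (add_nonneg (sqrt_nonneg (a i)) (sqrt_nonneg (b i))), ← abs_mul]
    congr 1
    linear_combination -sq_sqrt (ha i) + sq_sqrt (hb i)
  have h_plus : ∀ i, (√(a i) + √(b i)) ^ 2 ≤ 2 * (a i + b i) := fun i => by
    nlinarith [sq_sqrt (ha i), sq_sqrt (hb i), sq_nonneg (√(a i) - √(b i))]
  calc (∑ i ∈ s, |a i - b i|) ^ 2
      ≤ (∑ i ∈ s, |√(a i) - √(b i)| ^ 2) * ∑ i ∈ s, (√(a i) + √(b i)) ^ 2 := by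
        simp only [h_factor]
        exact sum_mul_sq_le_sq_mul_sq s _ _
    _ ≤ (∑ i ∈ s, (√(a i) - √(b i)) ^ 2) * (2 * ∑ i ∈ s, (a i + b i)) := by
        simp only [sq_abs, mul_sum]
        gcongr with i
        exact h_plus i

theorem sum_rpow_mul_rpow_le_one_sub_sq_half_sum_abs_sub {ι : Type*} [Fintype ι]
    {p q : ι → ℝ} (hp : ∀ i, 0 ≤ p i) (hq : ∀ i, 0 ≤ q i) (hp1 : ∑ i, p i = 1)
    (hq1 : ∑ i, q i = 1) {α : ℝ} (hα0 : 0 ≤ α) (hα1 : α ≤ 1) :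
    ∑ i, p i ^ α * q i ^ (1 - α) ≤ 1 - α * (1 - α) * ((∑ i, |p i - q i|) / 2) ^ 2 := by
  set hellinger := ∑ i, (√(p i) - √(q i)) ^ 2
  have h_tv : ((∑ i, |p i - q i|) / 2) ^ 2 ≤ hellinger := by
    have h := sq_sum_abs_sub_le_mul_sum_sq_sqrt_sub univ hp hq
    rw [sum_add_distrib, hp1, hq1] at h
    linarith
  calc ∑ i, p i ^ α * q i ^ (1 - α)
      ≤ ∑ i, (α * p i + (1 - α) * q i - α * (1 - α) * (√(p i) - √(q i)) ^ 2) :=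
        sum_le_sum fun i _ => rpow_mul_rpow_le_sub_sq_sqrt_sub (hp i) (hq i) hα0 hα1
    _ = 1 - α * (1 - α) * hellinger := by
        simp only [sum_sub_distrib, sum_add_distrib, ← mul_sum, hp1, hq1, hellinger]
        ring
    _ ≤ 1 - α * (1 - α) * ((∑ i, |p i - q i|) / 2) ^ 2 := by
        gcongr

theorem powerSum_le_of_far_from_uniform_general (d : ℕ) (hd : 0 < d) (p : Fin d → ℝ)
    (hnn : ∀ i, 0 ≤ p i) (hsum : ∑ i, p i = 1)
    (γ : ℝ) (hγdef : ∑ i, |p i - 1 / d| = 2 * γ)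
    (α : ℝ) (hα0 : 0 < α) (hα1 : α < 1) :
    ∑ i, p i ^ α ≤ (1 - α * (1 - α) * γ ^ 2) * (d : ℝ) ^ (1 - α) := by
  have hd' : (0 : ℝ) < d := Nat.cast_pos.mpr hd
  have h_uniform : ∑ _i : Fin d, (1 / d : ℝ) = 1 := by
    rw [sum_const, card_univ, Fintype.card_fin, nsmul_eq_mul, mul_one_div_cancel hd'.ne']
  have h := sum_rpow_mul_rpow_le_one_sub_sq_half_sum_abs_sub hnn (fun _ => by positivity) hsum
    h_uniform hα0.le hα1.le
  rw [hγdef, mul_div_cancel_left₀ γ two_ne_zero, ← sum_mul,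
    div_rpow zero_le_one hd'.le, one_rpow, mul_one_div] at h
  exact (div_le_iff₀ (rpow_pos_of_pos hd' _)).mp h

/-- If `p` is a distribution over `[d]` at ℓ1 distance `2γ` from uniform and `0 < α < 1`,
then `∑ p_i^α ≤ (1 - α(1-α)γ²)·d^(1-α)`. -/
theorem powerSum_le_of_far_from_uniform (d : ℕ) (hd : 0 < d) (p : Fin d → ℝ)
    (hnn : ∀ i, 0 ≤ p i) (hsum : ∑ i, p i = 1)
    (γ : ℝ) (hγ : 0 ≤ γ) (hγdef : ∑ i, |p i - 1 / d| = 2 * γ)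
    (α : ℝ) (hα0 : 0 < α) (hα1 : α < 1) :
    ∑ i, p i ^ α ≤ (1 - α * (1 - α) * γ ^ 2) * (d : ℝ) ^ (1 - α) :=
  powerSum_le_of_far_from_uniform_general d hd p hnn hsum γ hγdef α hα0 hα1
end

section
/- Let α and ε be real numbers with 0 < α < 1 and 0 < ε < 1. Then for every real x with 0 ≤ x ≤ 1 − ε, one has x^{1−α}·(x+ε)^α + (1−x)^{1−α}·(1−x−ε)^α < 1 − α(1−α)·ε². -/
/-!
Weighted AM-GM applied to `√a, √b` and then squared loses exactly the Hellinger-type term: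
`a^p b^q ≤ p a + q b - p q (√a - √b)²`. Summing over the two points, the bound reduces to
`(√x - √(x+ε))² + (√(1-x) - √(1-x-ε))² > ε²`. Each square is `ε² / (√u + √v)²`, and
`(√u + √v)² < 2(u + v)`; the two denominators `2(2x+ε)` and `2(2-2x-ε)` add up to `4`, so
the sum of reciprocals is at least `1`.
-/

namespace Real

theorem geom_mean_le_arith_mean2_weighted_sub_sq_sqrt {p q a b : ℝ} (hp : 0 ≤ p) (hq : 0 ≤ q)
    (hpq : p + q = 1) (ha : 0 ≤ a) (hb : 0 ≤ b) :
    a ^ p * b ^ q ≤ p * a + q * b - p * q * (√a - √b) ^ 2 := by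
  have hgm : √a ^ p * √b ^ q ≤ p * √a + q * √b :=
    geom_mean_le_arith_mean2_weighted hp hq (sqrt_nonneg a) (sqrt_nonneg b) hpq
  have hsq : (√a ^ p * √b ^ q) ^ 2 = a ^ p * b ^ q := by
    rw [mul_pow, ← rpow_mul_natCast (sqrt_nonneg a), ← rpow_mul_natCast (sqrt_nonneg b),
      mul_comm p, mul_comm q, rpow_mul (sqrt_nonneg a), rpow_mul (sqrt_nonneg b),
      rpow_natCast, rpow_natCast, sq_sqrt ha, sq_sqrt hb]
  have hsq_le := pow_le_pow_left₀ (by positivity) hgm 2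
  rw [hsq] at hsq_le
  have hq' : q = 1 - p := by linarith
  subst hq'
  nlinarith [sq_sqrt ha, sq_sqrt hb]

theorem div_two_mul_add_lt_sq_sub_sqrt {x y : ℝ} (hx : 0 ≤ x) (hy : 0 ≤ y) (hxy : x ≠ y) :
    (x - y) ^ 2 / (2 * (x + y)) < (√x - √y) ^ 2 := by
  have hsum : 0 < x + y := lt_of_le_of_ne (add_nonneg hx hy) fun h => hxy (by linarith)
  have hst : √x ≠ √y := fun h => hxy (by rw [← sq_sqrt hx, ← sq_sqrt hy, h])
  have hpos : 0 < (√x - √y) ^ 2 := by positivity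
  rw [div_lt_iff₀ (by positivity)]
  have hx' := sq_sqrt hx
  have hy' := sq_sqrt hy
  set s := √x
  set t := √y
  rw [← hx', ← hy']
  have hfactor : (s ^ 2 - t ^ 2) ^ 2 = (s - t) ^ 2 * (s + t) ^ 2 := by ring
  rw [hfactor]
  nlinarith [mul_pos hpos hpos]

theorem sq_lt_sq_sub_sqrt_add_sq_sub_sqrt {ε x : ℝ} (hε : 0 < ε) (hx0 : 0 ≤ x)
    (hx1 : x ≤ 1 - ε) :
    ε ^ 2 < (√x - √(x + ε)) ^ 2 + (√(1 - x) - √(1 - x - ε)) ^ 2 := by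
  have h₁ := div_two_mul_add_lt_sq_sub_sqrt hx0 (by linarith : 0 ≤ x + ε) (by linarith)
  have h₂ := div_two_mul_add_lt_sq_sub_sqrt (by linarith : 0 ≤ 1 - x)
    (by linarith : 0 ≤ 1 - x - ε) (by linarith)
  have hu : 0 < 2 * (x + (x + ε)) := by linarith
  have hv : 0 < 2 * (1 - x + (1 - x - ε)) := by linarith
  have hharm : ε ^ 2 ≤ (x - (x + ε)) ^ 2 / (2 * (x + (x + ε))) +
      (1 - x - (1 - x - ε)) ^ 2 / (2 * (1 - x + (1 - x - ε))) := by
    rw [div_add_div _ _ hu.ne' hv.ne', le_div_iff₀ (by positivity)]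
    nlinarith [sq_nonneg (4 * x + 2 * ε - 2), sq_nonneg ε]
  linarith

end Real

theorem two_point_bound_general (α ε : ℝ) (hα0 : 0 < α) (hα1 : α < 1)
    (hε0 : 0 < ε) (x : ℝ) (hx0 : 0 ≤ x) (hx1 : x ≤ 1 - ε) :
    x ^ (1 - α) * (x + ε) ^ α + (1 - x) ^ (1 - α) * (1 - x - ε) ^ α <
      1 - α * (1 - α) * ε ^ 2 := by
  have hw : 1 - α + α = 1 := by ring
  have h₁ := Real.geom_mean_le_arith_mean2_weighted_sub_sq_sqrt (by linarith) hα0.le hw hx0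
    (by linarith : 0 ≤ x + ε)
  have h₂ := Real.geom_mean_le_arith_mean2_weighted_sub_sq_sqrt (by linarith) hα0.le hw
    (by linarith : 0 ≤ 1 - x) (by linarith : 0 ≤ 1 - x - ε)
  have hH := Real.sq_lt_sq_sub_sqrt_add_sq_sub_sqrt hε0 hx0 hx1
  have hαα : 0 < (1 - α) * α := mul_pos (by linarith) hα0
  linarith [mul_lt_mul_of_pos_left hH hαα]

/-- For `0 < α < 1`, `0 < ε < 1`, and `0 ≤ x ≤ 1 - ε`,
`x^(1-α)(x+ε)^α + (1-x)^(1-α)(1-x-ε)^α < 1 - α(1-α)ε²`. -/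
theorem two_point_bound (α ε : ℝ) (hα0 : 0 < α) (hα1 : α < 1)
    (hε0 : 0 < ε) (hε1 : ε < 1) (x : ℝ) (hx0 : 0 ≤ x) (hx1 : x ≤ 1 - ε) :
    x ^ (1 - α) * (x + ε) ^ α + (1 - x) ^ (1 - α) * (1 - x - ε) ^ α <
      1 - α * (1 - α) * ε ^ 2 :=
  two_point_bound_general α ε hα0 hα1 hε0 x hx0 hx1
end

section
/- Let d ≥ 2 and n ≥ 1 be integers, and let X_1,…,X_n be independent random variables each uniformly distributed over [d] = {1,…,d}. For each i ∈ [d], let N_i = |{k ∈ [n] : X_k = i}| and let p̂_i = N_i/n be the empirical distribution. Then E[ Σ_{i=1}^d |p̂_i − 1/d| ] ≥ min{ 1/2, (8/81)·√(d/n) }. -/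
/-!
If `2n < d`, at least `d - n` symbols are never observed and each of them contributes `1/d`, so
the distance is at least `1/2` for every sample. Otherwise fix a symbol `i` and write
`S = n (p̂_i - 1/d) = ∑ₖ Zₖ` with `Zₖ = 1{Xₖ = i} - 1/d`: independent, centred, bounded by `1`, of
variance `v = (1/d)(1 - 1/d)`. With `m = n v`, independence gives `E S² = m` and
`E S⁴ ≤ m + 3m²`, and the pointwise inequality `y² ≤ t|y| + y⁴/t²` at `t² = 3(1 + 3m)`, where
`E S⁴ / t² ≤ m/3`, turns these into `E|S| ≥ (2m/3)/t`. Summing over the `d` symbols and using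
`m ≥ 1/4` (from `d ≤ 2n`) gives `(8/81)√(d/n)`.
-/

open MeasureTheory ProbabilityTheory Finset

lemma sq_le_mul_abs_add_pow_four_div (y : ℝ) {t : ℝ} (ht : 0 < t) :
    y ^ 2 ≤ t * |y| + y ^ 4 / t ^ 2 := by
  rw [← sq_abs y, show y ^ 4 = |y| ^ 4 by rw [← abs_pow, abs_of_nonneg (by positivity)]]
  rcases le_total |y| t with hyt | hty
  · have : 0 ≤ |y| ^ 4 / t ^ 2 := by positivity
    nlinarith [abs_nonneg y]
  · have : |y| ^ 2 ≤ |y| ^ 4 / t ^ 2 := by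
      rw [le_div_iff₀ (by positivity)]
      nlinarith [mul_le_mul_of_nonneg_left (pow_le_pow_left₀ ht.le hty 2) (sq_nonneg |y|)]
    nlinarith [abs_nonneg y]

lemma eight_div_eighty_one_mul_sqrt_div_le {q u : ℝ} (hq : 1 / 2 ≤ q) (hu : 1 / 4 ≤ u) :
    8 / 81 * √(q / u) ≤ 2 * q / 3 / √(3 * (1 + 3 * u)) := by
  rw [← Real.sqrt_sq (by positivity : (0 : ℝ) ≤ 2 * q / 3), ← Real.sqrt_div' _ (by positivity),
    ← Real.sqrt_sq (by norm_num : (0 : ℝ) ≤ 8 / 81), ← Real.sqrt_mul (by positivity)]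
  refine Real.sqrt_le_sqrt ?_
  have hu0 : 0 < u := by linarith
  field_simp
  nlinarith [mul_nonneg (mul_nonneg (by linarith : (0 : ℝ) ≤ q) (by linarith : (0 : ℝ) ≤ u))
    (by linarith : (0 : ℝ) ≤ 2 * q - 1), mul_nonneg (by linarith : (0 : ℝ) ≤ q)
    (by linarith : (0 : ℝ) ≤ 4 * u - 1)]

lemma sum_ite_eq_sub_inv_card {α : Type*} [Fintype α] [DecidableEq α] (i : α) :
    ∑ j, ((if j = i then 1 else 0) - (Fintype.card α : ℝ)⁻¹) = 0 := by
  have : (Fintype.card α : ℝ) ≠ 0 := by exact_mod_cast Fintype.card_pos_iff.mpr ⟨i⟩ |>.ne'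
  simp [sum_sub_distrib, this]

lemma sum_ite_eq_sub_inv_card_sq {α : Type*} [Fintype α] [DecidableEq α] (i : α) :
    ∑ j, ((if j = i then 1 else 0) - (Fintype.card α : ℝ)⁻¹) ^ 2 =
      1 - (Fintype.card α : ℝ)⁻¹ := by
  have : (Fintype.card α : ℝ) ≠ 0 := by exact_mod_cast Fintype.card_pos_iff.mpr ⟨i⟩ |>.ne'
  have h (j : α) : ((if j = i then 1 else 0) - (Fintype.card α : ℝ)⁻¹) ^ 2 =
      (1 - 2 * (Fintype.card α : ℝ)⁻¹) * (if j = i then 1 else 0) +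
        (Fintype.card α : ℝ)⁻¹ ^ 2 := by
    split_ifs <;> ring
  simp only [h, sum_add_distrib, ← mul_sum, sum_ite_eq', mem_univ, if_true, sum_const, card_univ,
    nsmul_eq_mul]
  field_simp
  ring

noncomputable def empiricalFreq {n : ℕ} {α : Type*} [DecidableEq α] (x : Fin n → α) (i : α) :
    ℝ :=
  (#{k | x k = i} : ℝ) / n

lemma empiricalFreq_sub_inv_card_eq {n d : ℕ} (hn : n ≠ 0) (x : Fin n → Fin d) (i : Fin d) :
    empiricalFreq x i - 1 / d = (∑ k, ((if x k = i then 1 else 0) - (d : ℝ)⁻¹)) / n := by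
  rw [sum_sub_distrib, sum_boole, sum_const, card_univ, Fintype.card_fin, nsmul_eq_mul,
    sub_div, mul_div_cancel_left₀ _ (by exact_mod_cast hn), one_div]
  rfl

lemma sub_div_le_sum_abs_empiricalFreq_sub {n d : ℕ} (x : Fin n → Fin d) :
    ((d : ℝ) - n) / d ≤ ∑ i, |empiricalFreq x i - 1 / d| := by
  classical
  set B := univ.image x
  have hB : (#B : ℝ) ≤ n := by exact_mod_cast card_image_le.trans (card_fin n).le
  calc ((d : ℝ) - n) / d ≤ #(univ \ B) / d := by
        rw [card_sdiff_of_subset (subset_univ B), card_univ, Fintype.card_fin,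
          Nat.cast_sub (card_le_univ B |>.trans (Fintype.card_fin d).le)]
        gcongr
    _ = ∑ i ∈ univ \ B, |empiricalFreq x i - 1 / d| := by
        rw [div_eq_mul_one_div, ← nsmul_eq_mul, ← sum_const]
        refine sum_congr rfl fun i hi => ?_
        have : #{k | x k = i} = 0 := by
          simpa [B, filter_eq_empty_iff] using (mem_sdiff.mp hi).2
        simp [empiricalFreq, this]
    _ ≤ ∑ i, |empiricalFreq x i - 1 / d| :=
        sum_le_sum_of_subset_of_nonneg sdiff_subset fun _ _ _ => abs_nonneg _

section Probability

variable {Ω : Type*} [MeasurableSpace Ω] {P : Measure Ω}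

lemma integrable_comp_of_finite [IsFiniteMeasure P] {β : Type*} [Finite β] [MeasurableSpace β]
    [MeasurableSingletonClass β] {Y : Ω → β} (hY : Measurable Y) (f : β → ℝ) :
    Integrable (fun ω => f (Y ω)) P :=
  Integrable.of_finite.comp_measurable hY

lemma integral_comp_eq_sum_div_card {α : Type*} [Fintype α] [MeasurableSpace α]
    [MeasurableSingletonClass α] [IsFiniteMeasure P] {X : Ω → α} (hX : Measurable X)
    (hunif : ∀ i, P {ω | X ω = i} = (Fintype.card α : ENNReal)⁻¹) (f : α → ℝ) :
    ∫ ω, f (X ω) ∂P = (∑ i, f i) / Fintype.card α := by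
  rw [← integral_map hX.aemeasurable (measurable_of_finite f).aestronglyMeasurable,
    integral_fintype .of_finite, sum_div]
  refine sum_congr rfl fun i _ => ?_
  rw [measureReal_def, Measure.map_apply hX (measurableSet_singleton i)]
  simp [Set.preimage, hunif, div_eq_inv_mul]

lemma integrable_pow_mul_pow_of_abs_le [IsFiniteMeasure P] {S Z : Ω → ℝ} {C D : ℝ}
    (hS : Measurable S) (hSC : ∀ ω, |S ω| ≤ C) (hZ : Measurable Z) (hZD : ∀ ω, |Z ω| ≤ D)
    (a b : ℕ) : Integrable (fun ω => S ω ^ a * Z ω ^ b) P :=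
  .of_bound (by fun_prop) (C ^ a * D ^ b) <| ae_of_all _ fun ω => by
    rw [Real.norm_eq_abs, abs_mul, abs_pow, abs_pow]
    exact mul_le_mul (pow_le_pow_left₀ (abs_nonneg _) (hSC ω) a)
      (pow_le_pow_left₀ (abs_nonneg _) (hZD ω) b) (by positivity)
      (pow_nonneg ((abs_nonneg _).trans (hSC ω)) a)

lemma integrable_pow_of_abs_le [IsFiniteMeasure P] {S : Ω → ℝ} {C : ℝ}
    (hS : Measurable S) (hSC : ∀ ω, |S ω| ≤ C) (a : ℕ) : Integrable (fun ω => S ω ^ a) P :=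
  .of_bound (by fun_prop) (C ^ a) <| ae_of_all _ fun ω => by
    rw [Real.norm_eq_abs, abs_pow]
    exact pow_le_pow_left₀ (abs_nonneg _) (hSC ω) a

lemma ProbabilityTheory.IndepFun.integral_add_pow [IsFiniteMeasure P] {S Z : Ω → ℝ} {C D : ℝ}
    (hSZ : IndepFun S Z P) (hS : Measurable S) (hSC : ∀ ω, |S ω| ≤ C) (hZ : Measurable Z)
    (hZD : ∀ ω, |Z ω| ≤ D) (N : ℕ) :
    ∫ ω, (S ω + Z ω) ^ N ∂P =
      ∑ j ∈ range (N + 1), (∫ ω, S ω ^ j ∂P) * (∫ ω, Z ω ^ (N - j) ∂P) * N.choose j := by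
  simp_rw [add_pow]
  rw [integral_finsetSum _ fun j _ =>
    (integrable_pow_mul_pow_of_abs_le hS hSC hZ hZD _ _).mul_const _]
  refine sum_congr rfl fun j _ => ?_
  rw [integral_mul_const]
  exact congrArg (· * _) <| (hSZ.comp (measurable_id.pow_const j)
    (measurable_id.pow_const (N - j))).integral_fun_mul_eq_mul_integral (by fun_prop) (by fun_prop)

lemma integral_sq_le_mul_integral_abs_add_integral_pow_four_div [IsFiniteMeasure P] {Y : Ω → ℝ}
    (hY : MemLp Y 4 P) {t : ℝ} (ht : 0 < t) :
    ∫ ω, Y ω ^ 2 ∂P ≤ t * ∫ ω, |Y ω| ∂P + (∫ ω, Y ω ^ 4 ∂P) / t ^ 2 := by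
  have h1 : Integrable (fun ω => |Y ω|) P := (hY.integrable (by norm_num)).abs
  have h2 : Integrable (fun ω => Y ω ^ 2) P :=
    (hY.mono_exponent (by norm_num)).integrable_sq
  have h4 : Integrable (fun ω => Y ω ^ 4) P := by
    simpa only [Real.norm_eq_abs, Even.pow_abs (by decide : Even 4)] using
      hY.integrable_norm_pow (p := 4) (by norm_num)
  rw [← integral_const_mul, ← integral_div, ← integral_add (h1.const_mul t) (h4.div_const _)]
  exact integral_mono h2 ((h1.const_mul t).add (h4.div_const _)) fun ω =>
    sq_le_mul_abs_add_pow_four_div (Y ω) ht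

lemma le_integral_abs_of_integral_sq_of_integral_pow_four_le [IsFiniteMeasure P] {Y : Ω → ℝ}
    (hY : MemLp Y 4 P) {m : ℝ} (hm : 0 ≤ m) (h2 : ∫ ω, Y ω ^ 2 ∂P = m)
    (h4 : ∫ ω, Y ω ^ 4 ∂P ≤ m + 3 * m ^ 2) :
    2 * m / 3 / √(3 * (1 + 3 * m)) ≤ ∫ ω, |Y ω| ∂P := by
  have hT : 0 < 3 * (1 + 3 * m) := by positivity
  have key :=
    integral_sq_le_mul_integral_abs_add_integral_pow_four_div hY (Real.sqrt_pos.mpr hT)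
  have h4' : (∫ ω, Y ω ^ 4 ∂P) / √(3 * (1 + 3 * m)) ^ 2 ≤ m / 3 := by
    rw [Real.sq_sqrt hT.le, div_le_iff₀ hT]
    nlinarith
  rw [div_le_iff₀ (Real.sqrt_pos.mpr hT)]
  linarith

variable [IsProbabilityMeasure P]

lemma ProbabilityTheory.IndepFun.integral_add_sq {S Z : Ω → ℝ} {C D : ℝ}
    (hSZ : IndepFun S Z P) (hS : Measurable S) (hSC : ∀ ω, |S ω| ≤ C) (hZ : Measurable Z)
    (hZD : ∀ ω, |Z ω| ≤ D) (hZ0 : ∫ ω, Z ω ∂P = 0) :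
    ∫ ω, (S ω + Z ω) ^ 2 ∂P = ∫ ω, S ω ^ 2 ∂P + ∫ ω, Z ω ^ 2 ∂P := by
  rw [hSZ.integral_add_pow hS hSC hZ hZD]
  simp [sum_range_succ, hZ0]
  ring

lemma ProbabilityTheory.IndepFun.integral_add_pow_four {S Z : Ω → ℝ} {C D : ℝ}
    (hSZ : IndepFun S Z P) (hS : Measurable S) (hSC : ∀ ω, |S ω| ≤ C) (hZ : Measurable Z)
    (hZD : ∀ ω, |Z ω| ≤ D) (hS0 : ∫ ω, S ω ∂P = 0) (hZ0 : ∫ ω, Z ω ∂P = 0) :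
    ∫ ω, (S ω + Z ω) ^ 4 ∂P =
      ∫ ω, S ω ^ 4 ∂P + 6 * (∫ ω, S ω ^ 2 ∂P) * (∫ ω, Z ω ^ 2 ∂P) + ∫ ω, Z ω ^ 4 ∂P := by
  rw [hSZ.integral_add_pow hS hSC hZ hZD]
  simp [sum_range_succ, hS0, hZ0, Nat.choose]
  ring

lemma ProbabilityTheory.iIndepFun.integral_sum_sq_and_pow_four {ι : Type*} {Z : ι → Ω → ℝ}
    {v : ℝ}     (hZ : ∀ k, Measurable (Z k)) (hZ1 : ∀ k ω, |Z k ω| ≤ 1) (hindep : iIndepFun Z P)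
    (h0 : ∀ k, ∫ ω, Z k ω ∂P = 0) (h2 : ∀ k, ∫ ω, Z k ω ^ 2 ∂P = v) (s : Finset ι) :
    ∫ ω, (∑ k ∈ s, Z k ω) ^ 2 ∂P = #s * v ∧
      ∫ ω, (∑ k ∈ s, Z k ω) ^ 4 ∂P ≤ #s * v + 3 * (#s * v) ^ 2 := by
  classical
  induction s using Finset.induction_on with
  | empty => simp
  | @insert k s hk ih =>
    have hS : Measurable fun ω => ∑ j ∈ s, Z j ω := Finset.measurable_sum s fun j _ => hZ j
    have hSC : ∀ ω, |∑ j ∈ s, Z j ω| ≤ #s := fun ω =>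
      (abs_sum_le_sum_abs _ _).trans (by simpa using sum_le_card_nsmul s _ 1 fun j _ => hZ1 j ω)
    have hS0 : ∫ ω, ∑ j ∈ s, Z j ω ∂P = 0 := by
      rw [integral_finsetSum _ fun j _ =>
        .of_bound (hZ j).aestronglyMeasurable 1 (ae_of_all _ (hZ1 j))]
      simp [h0]
    have hSZ : IndepFun (fun ω => ∑ j ∈ s, Z j ω) (Z k) P := by
      simpa only [Finset.sum_fn] using hindep.indepFun_finsetSum_of_notMem hZ hk
    have hv : 0 ≤ v := h2 k ▸ integral_nonneg fun ω => sq_nonneg _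
    have hZ4 : ∫ ω, Z k ω ^ 4 ∂P ≤ v := by
      rw [← h2 k]
      refine integral_mono (integrable_pow_of_abs_le (hZ k) (hZ1 k) 4)
        (integrable_pow_of_abs_le (hZ k) (hZ1 k) 2) fun ω => ?_
      have := sq_le_one_iff_abs_le_one _ |>.mpr (hZ1 k ω)
      nlinarith [sq_nonneg (Z k ω)]
    simp_rw [sum_insert hk, add_comm (Z k _)]
    rw [hSZ.integral_add_sq hS hSC (hZ k) (hZ1 k) (h0 k),
      hSZ.integral_add_pow_four hS hSC (hZ k) (hZ1 k) hS0 (h0 k), card_insert_of_notMem hk,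
      h2 k, ih.1]
    push_cast
    exact ⟨by ring, by nlinarith [ih.2]⟩

lemma le_integral_abs_empiricalFreq_sub {d n : ℕ} (hn : n ≠ 0) {X : Fin n → Ω → Fin d}
    (hmeas : ∀ k, Measurable (X k)) (hindep : iIndepFun X P)
    (hunif : ∀ k, ∀ i : Fin d, P {ω | X k ω = i} = (d : ENNReal)⁻¹) (i : Fin d) {m : ℝ}
    (hm : m = n * ((d : ℝ)⁻¹ * (1 - (d : ℝ)⁻¹))) :
    2 * m / 3 / √(3 * (1 + 3 * m)) / n ≤
      ∫ ω, |empiricalFreq (fun k => X k ω) i - 1 / d| ∂P := by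
  set g : Fin d → ℝ := fun j => (if j = i then 1 else 0) - (d : ℝ)⁻¹
  have hunif' : ∀ k i, P {ω | X k ω = i} = (Fintype.card (Fin d) : ENNReal)⁻¹ := by
    simpa using hunif
  have hg : ∀ j, |g j| ≤ 1 := by
    have hd : (1 : ℝ) ≤ d := by exact_mod_cast i.pos
    have : (d : ℝ)⁻¹ ≤ 1 := inv_le_one_of_one_le₀ hd
    intro j
    rw [abs_le]
    simp only [g]
    constructor <;> split_ifs <;> linarith [inv_nonneg.mpr (zero_le_one.trans hd)]
  have h0 : ∀ k, ∫ ω, g (X k ω) ∂P = 0 := fun k => by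
    have := sum_ite_eq_sub_inv_card i
    rw [Fintype.card_fin] at this
    rw [integral_comp_eq_sum_div_card (hmeas k) (hunif' k), Fintype.card_fin, this, zero_div]
  have h2 : ∀ k, ∫ ω, g (X k ω) ^ 2 ∂P = (d : ℝ)⁻¹ * (1 - (d : ℝ)⁻¹) := fun k => by
    have := sum_ite_eq_sub_inv_card_sq i
    rw [Fintype.card_fin] at this
    rw [integral_comp_eq_sum_div_card (hmeas k) (hunif' k) (fun j => g j ^ 2), Fintype.card_fin,
      this, div_eq_inv_mul]
  have hZ : ∀ k, Measurable fun ω => g (X k ω) := fun k =>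
    (measurable_of_finite g).comp (hmeas k)
  obtain ⟨hS2, hS4⟩ := (hindep.comp (fun _ => g) fun _ => measurable_of_finite g)
    |>.integral_sum_sq_and_pow_four hZ (fun k ω => hg _) h0 h2 univ
  rw [card_univ, Fintype.card_fin, ← hm] at hS2 hS4
  have hS : MemLp (fun ω => ∑ k, g (X k ω)) 4 P :=
    .of_bound (Finset.measurable_sum _ fun k _ => hZ k).aestronglyMeasurable n <| ae_of_all _
      fun ω => (abs_sum_le_sum_abs _ _).trans <| by
        simpa using sum_le_card_nsmul univ (fun k => |g (X k ω)|) 1 fun k _ => hg _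
  have hm0 : 0 ≤ m := hS2 ▸ integral_nonneg fun ω => sq_nonneg _
  simp_rw [empiricalFreq_sub_inv_card_eq hn, abs_div, Nat.abs_cast, integral_div]
  gcongr
  exact le_integral_abs_of_integral_sq_of_integral_pow_four_le hS hm0 hS2 hS4

lemma eight_div_eighty_one_mul_sqrt_le_integral_sum_abs_empiricalFreq_sub {d n : ℕ}
    (hd : 2 ≤ d) (hdn : d ≤ 2 * n) {X : Fin n → Ω → Fin d} (hmeas : ∀ k, Measurable (X k))
    (hindep : iIndepFun X P) (hunif : ∀ k, ∀ i : Fin d, P {ω | X k ω = i} = (d : ENNReal)⁻¹) :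
    8 / 81 * √((d : ℝ) / n) ≤ ∫ ω, ∑ i, |empiricalFreq (fun k => X k ω) i - 1 / d| ∂P := by
  have hn : n ≠ 0 := by omega
  have hdr : (2 : ℝ) ≤ d := by exact_mod_cast hd
  have hdnr : (d : ℝ) ≤ 2 * n := by exact_mod_cast hdn
  set q : ℝ := 1 - (d : ℝ)⁻¹ with hq_def
  set m : ℝ := n * ((d : ℝ)⁻¹ * q) with hm_def
  have hq : 1 / 2 ≤ q := by
    rw [hq_def, ← one_div]
    linarith [one_div_le_one_div_of_le two_pos hdr]
  have hm : 1 / 4 ≤ m := by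
    have hnd : (1 : ℝ) / 2 ≤ n * (d : ℝ)⁻¹ := by
      rw [← div_eq_mul_inv, le_div_iff₀ (by positivity)]
      linarith
    calc (1 : ℝ) / 4 = 1 / 2 * (1 / 2) := by norm_num
      _ ≤ n * (d : ℝ)⁻¹ * q := mul_le_mul hnd hq (by norm_num) (by positivity)
      _ = m := by ring
  have hqm : q / m = d / n := by
    rw [hm_def]
    field_simp
  rw [integral_finsetSum _ fun i _ => integrable_comp_of_finite (measurable_pi_lambda _ hmeas)
    fun x => |empiricalFreq x i - 1 / d|]
  calc 8 / 81 * √((d : ℝ) / n) = 8 / 81 * √(q / m) := by rw [hqm]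
    _ ≤ 2 * q / 3 / √(3 * (1 + 3 * m)) := eight_div_eighty_one_mul_sqrt_div_le hq hm
    _ = ∑ _i : Fin d, 2 * m / 3 / √(3 * (1 + 3 * m)) / n := by
      rw [sum_const, card_univ, Fintype.card_fin, nsmul_eq_mul, hm_def]
      field_simp
    _ ≤ _ := sum_le_sum fun i _ => le_integral_abs_empiricalFreq_sub hn hmeas hindep hunif i rfl

lemma half_le_integral_sum_abs_empiricalFreq_sub {d n : ℕ} (hdn : 2 * n < d)
    {X : Fin n → Ω → Fin d} (hmeas : ∀ k, Measurable (X k)) :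
    1 / 2 ≤ ∫ ω, ∑ i, |empiricalFreq (fun k => X k ω) i - 1 / d| ∂P := by
  have hhalf : (1 / 2 : ℝ) ≤ ((d : ℝ) - n) / d := by
    have : (2 * n : ℝ) < d := by exact_mod_cast hdn
    rw [le_div_iff₀ (by linarith)]
    linarith
  calc (1 / 2 : ℝ) ≤ ∫ _ω, ((d : ℝ) - n) / d ∂P := by simpa using hhalf
    _ ≤ _ := integral_mono (integrable_const _)
      (integrable_comp_of_finite (measurable_pi_lambda _ hmeas)
        fun x => ∑ i, |empiricalFreq x i - 1 / d|)
      fun ω => sub_div_le_sum_abs_empiricalFreq_sub _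

end Probability

theorem expected_l1_from_uniform_ge_general (d n : ℕ) (hd : 2 ≤ d)
    {Ω : Type*} [MeasurableSpace Ω] (P : Measure Ω) [IsProbabilityMeasure P]
    (X : Fin n → Ω → Fin d)
    (hmeas : ∀ k, Measurable (X k))
    (hindep : iIndepFun X P)
    (hunif : ∀ k, ∀ i : Fin d, P {ω | X k ω = i} = (d : ENNReal)⁻¹) :
    min (1 / 2 : ℝ) ((8 / 81) * Real.sqrt ((d : ℝ) / n)) ≤
      ∫ ω, ∑ i : Fin d,
        |((Finset.univ.filter fun k => X k ω = i).card : ℝ) / n - 1 / d| ∂P := by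
  change _ ≤ ∫ ω, ∑ i, |empiricalFreq (fun k => X k ω) i - 1 / d| ∂P
  rcases le_or_gt d (2 * n) with hdn | hdn
  · exact (min_le_right _ _).trans <|
      eight_div_eighty_one_mul_sqrt_le_integral_sum_abs_empiricalFreq_sub hd hdn hmeas hindep hunif
  · exact (min_le_left _ _).trans (half_le_integral_sum_abs_empiricalFreq_sub hdn hmeas)

/-- If `X_1,…,X_n` are i.i.d. uniform over `[d]` (`d ≥ 2`) and `p̂` is the empirical
distribution, then `E[∑_i |p̂_i - 1/d|] ≥ min{1/2, (8/81)√(d/n)}`. -/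
theorem expected_l1_from_uniform_ge (d n : ℕ) (hd : 2 ≤ d) (hn : 1 ≤ n)
    {Ω : Type*} [MeasurableSpace Ω] (P : Measure Ω) [IsProbabilityMeasure P]
    (X : Fin n → Ω → Fin d)
    (hmeas : ∀ k, Measurable (X k))
    (hindep : iIndepFun X P)
    (hunif : ∀ k, ∀ i : Fin d, P {ω | X k ω = i} = (d : ENNReal)⁻¹) :
    min (1 / 2 : ℝ) ((8 / 81) * Real.sqrt ((d : ℝ) / n)) ≤
      ∫ ω, ∑ i : Fin d,
        |((Finset.univ.filter fun k => X k ω = i).card : ℝ) / n - 1 / d| ∂P :=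
  expected_l1_from_uniform_ge_general d n hd P X hmeas hindep hunif
end
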